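/- arXiv:2003.00816 — 11 statements merged into one kernel-verified Lean document; each statement's English description precedes it below -/
import Mathlib

section
/- For the diffusion iterates: if the step-size satisfies 0 < α ≤ 2/(μ + L), then for every time k ∈ ℕ, √n·‖x̄^{k+1} − x̃^{(k+1)*}‖ ≤ (1 − αμ/2)·√n·‖x̄^k − x̃^{k*}‖ + αL·(Σ_{i=1}^n ‖x_i^k − x̄^k‖²)^{1/2} + (1 − αμ/2)·√n·Δ_x. -/
/-!
Since the columns of `W` sum to one, the network average moves by `x̄^{k+1} = x̄^k - α p`, where
`p` is the mean of the local gradients `∇f_j^{k+1}(x_j^k)`. This is an inexact gradient step on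
the mean objective `F = (1/n) Σ_j f_j^{k+1}`, whose minimiser is `x̃^{(k+1)*}`. The Baillon–Haddad
theorem, applied to the convex function `F - μ/2 ‖·‖²`, makes `∇F` strongly co-coercive, so the
exact step is a `(1 - αμ/2)`-contraction for `α ≤ 2/(μ+L)`. The error `√n ‖p - ∇F(x̄^k)‖` is at
most `L (Σ_i ‖x_i^k - x̄^k‖²)^{1/2}` by Lipschitz continuity and Cauchy–Schwarz, and moving from
`x̃^{k*}` to `x̃^{(k+1)*}` costs at most `Δ_x`.
-/

open Finset RealInnerProductSpace

section Gradient

variable {E : Type*} [NormedAddCommGroup E] [InnerProductSpace ℝ E] [CompleteSpace E]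
  {F : E → ℝ} {h : E → E}

theorem hasDerivAt_comp_add_smul (hF : ∀ z, HasGradientAt F (h z) z) (x v : E) (t : ℝ) :
    HasDerivAt (fun s : ℝ => F (x + s • v)) ⟪h (x + t • v), v⟫ t := by
  have hline : HasDerivAt (fun s : ℝ => x + s • v) v t := by
    simpa using ((hasDerivAt_id t).smul_const v).const_add x
  exact (hF (x + t • v)).hasFDerivAt.comp_hasDerivAt t hline

theorem hasGradientAt_const_mul_sum {ι : Type*} [Fintype ι] {F : ι → E → ℝ} {G : ι → E → E}
    (hF : ∀ i z, HasGradientAt (F i) (G i z) z) (c : ℝ) (z : E) :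
    HasGradientAt (fun w => c * ∑ i, F i w) (c • ∑ i, G i z) z := by
  rw [hasGradientAt_iff_hasFDerivAt, map_smul, map_sum]
  exact (HasFDerivAt.fun_sum fun i _ => (hF i z).hasFDerivAt).const_mul c

theorem add_inner_add_le_of_hasGradientAt {c : ℝ} (hF : ∀ z, HasGradientAt F (h z) z)
    (hmono : ∀ a b, c * ‖a - b‖ ^ 2 ≤ ⟪h a - h b, a - b⟫) (x y : E) :
    F x + ⟪h x, y - x⟫ + c / 2 * ‖y - x‖ ^ 2 ≤ F y := by
  set v := y - x
  let u : ℝ → ℝ := fun t => F (x + t • v) - t * ⟪h x, v⟫ - c / 2 * t ^ 2 * ‖v‖ ^ 2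
  have hu : ∀ t, HasDerivAt u (⟪h (x + t • v), v⟫ - ⟪h x, v⟫ - c * t * ‖v‖ ^ 2) t := by
    intro t
    have := ((hasDerivAt_comp_add_smul hF x v t).sub ((hasDerivAt_id t).mul_const ⟪h x, v⟫)).sub
      (((hasDerivAt_pow 2 t).const_mul (c / 2)).mul_const (‖v‖ ^ 2))
    exact this.congr_deriv (by ring)
  -- On `t > 0`, `hmono` at `x + t • v` and `x`, divided by `t`, is exactly `0 ≤ u' t`.
  have hu' : ∀ t ∈ interior (Set.Ici (0 : ℝ)),
      0 ≤ ⟪h (x + t • v), v⟫ - ⟪h x, v⟫ - c * t * ‖v‖ ^ 2 := by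
    intro t ht
    rw [interior_Ici] at ht
    have hm := hmono (x + t • v) x
    rw [add_sub_cancel_left, real_inner_smul_right, norm_smul, Real.norm_of_nonneg ht.out.le,
      inner_sub_left] at hm
    nlinarith [ht.out]
  have hmono_u : MonotoneOn u (Set.Ici 0) :=
    monotoneOn_of_hasDerivWithinAt_nonneg (convex_Ici 0)
      (fun t _ => (hu t).continuousAt.continuousWithinAt)
      (fun t _ => (hu t).hasDerivWithinAt) hu'
  have := hmono_u Set.self_mem_Ici (Set.mem_Ici.2 zero_le_one) zero_le_one
  simp only [u, zero_smul, add_zero, one_smul, add_sub_cancel, v] at this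
  linarith

theorem le_add_inner_add_of_hasGradientAt {C : ℝ} (hF : ∀ z, HasGradientAt F (h z) z)
    (hupper : ∀ a b, ⟪h a - h b, a - b⟫ ≤ C * ‖a - b‖ ^ 2) (x y : E) :
    F y ≤ F x + ⟪h x, y - x⟫ + C / 2 * ‖y - x‖ ^ 2 := by
  have hneg : ∀ z, HasGradientAt (fun w => -F w) (-h z) z := fun z => by
    rw [hasGradientAt_iff_hasFDerivAt, map_neg]
    exact (hF z).hasFDerivAt.neg
  have := add_inner_add_le_of_hasGradientAt (c := -C) hneg (fun a b => by
    rw [neg_sub_neg, ← neg_sub b a, inner_neg_right, norm_neg]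
    linarith [hupper b a]) x y
  rw [inner_neg_left] at this
  linarith

theorem norm_sub_sq_le_two_mul_bregman_of_hasGradientAt {L : ℝ} (hL : 0 < L)
    (hF : ∀ z, HasGradientAt F (h z) z) (hmono : ∀ a b, 0 ≤ ⟪h a - h b, a - b⟫)
    (hupper : ∀ a b, ⟪h a - h b, a - b⟫ ≤ L * ‖a - b‖ ^ 2) (a b : E) :
    ‖h b - h a‖ ^ 2 ≤ 2 * L * (F b - F a - ⟪h a, b - a⟫) := by
  set w := h b - h a
  -- Compare the lower bound at `a` with the upper bound at `b` at the point `z`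
  -- minimising the latter.
  set z := b - L⁻¹ • w
  have hlow := add_inner_add_le_of_hasGradientAt (c := 0) hF (by simpa using hmono) a z
  have hup := le_add_inner_add_of_hasGradientAt hF hupper b z
  have hza : ⟪h a, z - a⟫ = ⟪h a, b - a⟫ - L⁻¹ * ⟪h a, w⟫ := by
    rw [show z - a = (b - a) - L⁻¹ • w by simp only [z]; abel, inner_sub_right,
      real_inner_smul_right]
  have hzb : z - b = -(L⁻¹ • w) := by simp only [z]; abel
  rw [hzb, inner_neg_right, real_inner_smul_right, norm_neg, norm_smul, Real.norm_of_nonneg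
    (inv_nonneg.2 hL.le)] at hup
  have hw : L⁻¹ * ⟪h b, w⟫ - L⁻¹ * ⟪h a, w⟫ = L⁻¹ * ‖w‖ ^ 2 := by
    rw [← mul_sub, ← inner_sub_left, real_inner_self_eq_norm_sq]
  have hcoef : L / 2 * (L⁻¹ * ‖w‖) ^ 2 = L⁻¹ / 2 * ‖w‖ ^ 2 := by field_simp
  calc ‖w‖ ^ 2 = 2 * L * (L⁻¹ / 2 * ‖w‖ ^ 2) := by field_simp
    _ ≤ 2 * L * (F b - F a - ⟪h a, b - a⟫) := by gcongr; linarith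

theorem norm_sub_sq_le_mul_inner_of_hasGradientAt {L : ℝ} (hL : 0 < L)
    (hF : ∀ z, HasGradientAt F (h z) z) (hmono : ∀ a b, 0 ≤ ⟪h a - h b, a - b⟫)
    (hupper : ∀ a b, ⟪h a - h b, a - b⟫ ≤ L * ‖a - b‖ ^ 2) (x y : E) :
    ‖h x - h y‖ ^ 2 ≤ L * ⟪h x - h y, x - y⟫ := by
  have hxy := norm_sub_sq_le_two_mul_bregman_of_hasGradientAt hL hF hmono hupper y x
  have hyx := norm_sub_sq_le_two_mul_bregman_of_hasGradientAt hL hF hmono hupper x y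
  rw [norm_sub_rev] at hyx
  have hsum : ⟪h x - h y, x - y⟫ = -⟪h y, x - y⟫ - ⟪h x, y - x⟫ := by
    rw [← neg_sub x y, inner_neg_right, inner_sub_left]; ring
  rw [hsum]
  linarith

theorem mul_norm_sub_sq_add_norm_sub_sq_le_of_hasGradientAt {μ L : ℝ} (hμL : μ ≤ L)
    (hF : ∀ z, HasGradientAt F (h z) z)
    (hsc : ∀ a b, μ * ‖a - b‖ ^ 2 ≤ ⟪h a - h b, a - b⟫)
    (hsm : ∀ a b, ‖h a - h b‖ ≤ L * ‖a - b‖) (x y : E) :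
    μ * L * ‖x - y‖ ^ 2 + ‖h x - h y‖ ^ 2 ≤ (μ + L) * ⟪h x - h y, x - y⟫ := by
  have hinner_le : ∀ a b, ⟪h a - h b, a - b⟫ ≤ L * ‖a - b‖ ^ 2 := fun a b => by
    nlinarith [real_inner_le_norm (h a - h b) (a - b), hsm a b, norm_nonneg (a - b)]
  rcases hμL.lt_or_eq with hlt | rfl
  · -- Baillon–Haddad for the convex function `F - μ/2 ‖·‖²`.
    have hΦ : ∀ z, HasGradientAt (fun w => F w - μ / 2 * ‖w‖ ^ 2) (h z - μ • z) z := fun z => by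
      rw [hasGradientAt_iff_hasFDerivAt]
      refine ((hF z).hasFDerivAt.sub
        ((hasStrictFDerivAt_norm_sq z).hasFDerivAt.const_mul (μ / 2))).congr_fderiv ?_
      ext v
      simp only [sub_apply, InnerProductSpace.toDual_apply_apply,
        smul_apply, coe_innerSL_apply, map_sub, map_smul, smul_eq_mul,
        nsmul_eq_mul, Nat.cast_ofNat]
      ring
    have hdiff : ∀ a b, (h a - μ • a) - (h b - μ • b) = (h a - h b) - μ • (a - b) :=
      fun a b => by module
    have hinner : ∀ a b, ⟪(h a - μ • a) - (h b - μ • b), a - b⟫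
        = ⟪h a - h b, a - b⟫ - μ * ‖a - b‖ ^ 2 := fun a b => by
      rw [hdiff, inner_sub_left, real_inner_smul_left, real_inner_self_eq_norm_sq]
    have := norm_sub_sq_le_mul_inner_of_hasGradientAt (sub_pos.2 hlt) hΦ
      (fun a b => by rw [hinner]; linarith [hsc a b])
      (fun a b => by rw [hinner]; linarith [hinner_le a b]) x y
    rw [hinner, hdiff, norm_sub_sq_real, real_inner_smul_right, norm_smul, Real.norm_eq_abs, mul_pow, sq_abs]
      at this
    linarith
  · have hsq := pow_le_pow_left₀ (norm_nonneg _) (hsm x y) 2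
    rw [le_antisymm (hinner_le x y) (hsc x y)]
    linarith [mul_pow μ ‖x - y‖ 2]

end Gradient

section InnerProductSpace

variable {E : Type*} [NormedAddCommGroup E] [InnerProductSpace ℝ E]

theorem norm_sub_smul_le_of_mul_norm_sq_add_norm_sq_le {μ L α : ℝ} (hμ : 0 < μ) (hμL : μ ≤ L)
    (hα0 : 0 ≤ α) (hα : α ≤ 2 / (μ + L)) {u w : E}
    (huw : μ * L * ‖u‖ ^ 2 + ‖w‖ ^ 2 ≤ (μ + L) * ⟪w, u⟫) :
    ‖u - α • w‖ ≤ (1 - α * μ / 2) * ‖u‖ := by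
  have hμL0 : 0 < μ + L := by linarith
  have hαμL : α * (μ + L) ≤ 2 := (le_div_iff₀ hμL0).1 hα
  have hαμ : α * μ ≤ 1 := by nlinarith
  have hsq : ‖u - α • w‖ ^ 2 = ‖u‖ ^ 2 - 2 * α * ⟪w, u⟫ + α ^ 2 * ‖w‖ ^ 2 := by
    rw [norm_sub_sq_real, real_inner_smul_right, norm_smul, Real.norm_of_nonneg hα0,
      real_inner_comm]
    ring
  -- Multiplied by `μ + L`, `huw` turns `‖u - α • w‖²` into at most `(1 - αμ) ‖u‖²`.
  have hcontr : (μ + L) * ‖u - α • w‖ ^ 2 ≤ (μ + L) * ((1 - α * μ / 2) * ‖u‖) ^ 2 := by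
    rw [hsq]
    nlinarith [mul_le_mul_of_nonneg_left huw hα0,
      mul_nonneg (mul_nonneg hα0 (sq_nonneg ‖w‖)) (sub_nonneg.2 hαμL),
      mul_nonneg (mul_nonneg (mul_nonneg hα0 hμ.le) (sub_nonneg.2 hμL)) (sq_nonneg ‖u‖),
      mul_nonneg hμL0.le (sq_nonneg (α * μ * ‖u‖))]
  exact pow_le_pow_iff_left₀ (norm_nonneg _) (by nlinarith [norm_nonneg u]) two_ne_zero |>.1
    (le_of_mul_le_mul_left hcontr hμL0)

theorem norm_sub_smul_sub_le_of_mul_norm_sq_add_norm_sq_le {μ L α : ℝ} (hμ : 0 < μ)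
    (hμL : μ ≤ L) (hα0 : 0 ≤ α) (hα : α ≤ 2 / (μ + L)) {h : E → E} {y z p : E} (hz : h z = 0)
    (hyz : μ * L * ‖y - z‖ ^ 2 + ‖h y - h z‖ ^ 2 ≤ (μ + L) * ⟪h y - h z, y - z⟫) :
    ‖y - α • p - z‖ ≤ (1 - α * μ / 2) * ‖y - z‖ + α * ‖p - h y‖ := by
  have hsplit : y - α • p - z = ((y - z) - α • (h y - h z)) - α • (p - h y) := by
    rw [hz]
    module
  rw [hsplit, ← norm_smul_of_nonneg hα0]
  exact (norm_sub_le _ _).trans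
    (add_le_add_left (norm_sub_smul_le_of_mul_norm_sq_add_norm_sq_le hμ hμL hα0 hα hyz) _)

end InnerProductSpace

section Average

variable {ι E : Type*} [Fintype ι] [NormedAddCommGroup E] [InnerProductSpace ℝ E]

theorem mul_norm_sub_sq_le_inner_average_sub [Nonempty ι] {μ : ℝ} {g : ι → E → E}
    (hg : ∀ i a b, μ * ‖a - b‖ ^ 2 ≤ ⟪g i a - g i b, a - b⟫) (a b : E) :
    μ * ‖a - b‖ ^ 2 ≤
      ⟪(Fintype.card ι : ℝ)⁻¹ • ∑ i, g i a - (Fintype.card ι : ℝ)⁻¹ • ∑ i, g i b, a - b⟫ := by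
  rw [← smul_sub, ← sum_sub_distrib, real_inner_smul_left, sum_inner,
    le_inv_mul_iff₀ (by simp [Fintype.card_pos])]
  simpa using sum_le_sum fun i (_ : i ∈ univ) => hg i a b

theorem norm_average_sub_le [Nonempty ι] {L : ℝ} {g : ι → E → E}
    (hg : ∀ i a b, ‖g i a - g i b‖ ≤ L * ‖a - b‖) (a b : E) :
    ‖(Fintype.card ι : ℝ)⁻¹ • ∑ i, g i a - (Fintype.card ι : ℝ)⁻¹ • ∑ i, g i b‖ ≤ L * ‖a - b‖ := by
  rw [← smul_sub, ← sum_sub_distrib, norm_smul, norm_inv, Real.norm_natCast,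
    inv_mul_le_iff₀ (by simp [Fintype.card_pos])]
  calc ‖∑ i, (g i a - g i b)‖ ≤ ∑ i, ‖g i a - g i b‖ := norm_sum_le _ _
    _ ≤ ∑ _i : ι, L * ‖a - b‖ := sum_le_sum fun i _ => hg i a b
    _ = Fintype.card ι * (L * ‖a - b‖) := by simp

theorem sqrt_card_mul_norm_average_le (u : ι → E) :
    √(Fintype.card ι) * ‖(Fintype.card ι : ℝ)⁻¹ • ∑ i, u i‖ ≤ √(∑ i, ‖u i‖ ^ 2) := by
  have hcs : ∑ i, ‖u i‖ ≤ √(Fintype.card ι) * √(∑ i, ‖u i‖ ^ 2) := by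
    simpa using Real.sum_mul_le_sqrt_mul_sqrt univ (fun _ => 1) (fun i => ‖u i‖)
  have hn : √(Fintype.card ι) * (Fintype.card ι : ℝ)⁻¹ * √(Fintype.card ι) ≤ 1 := by
    rw [mul_right_comm, Real.mul_self_sqrt (Nat.cast_nonneg _)]
    exact mul_inv_le_one
  rw [norm_smul, norm_inv, Real.norm_natCast, ← mul_assoc]
  calc √(Fintype.card ι) * (Fintype.card ι : ℝ)⁻¹ * ‖∑ i, u i‖
      ≤ √(Fintype.card ι) * (Fintype.card ι : ℝ)⁻¹ * (√(Fintype.card ι) * √(∑ i, ‖u i‖ ^ 2)) := by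
        gcongr
        exact (norm_sum_le _ _).trans hcs
    _ ≤ √(∑ i, ‖u i‖ ^ 2) := by
        rw [← mul_assoc]
        exact mul_le_of_le_one_left (Real.sqrt_nonneg _) hn

theorem sqrt_card_mul_norm_average_sub_le {L : ℝ} (hL : 0 ≤ L) {g : ι → E → E}
    (hg : ∀ i a b, ‖g i a - g i b‖ ≤ L * ‖a - b‖) (y : ι → E) (z : E) :
    √(Fintype.card ι) *
        ‖(Fintype.card ι : ℝ)⁻¹ • ∑ i, g i (y i) - (Fintype.card ι : ℝ)⁻¹ • ∑ i, g i z‖ ≤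
      L * √(∑ i, ‖y i - z‖ ^ 2) := calc
  _ ≤ √(∑ i, ‖g i (y i) - g i z‖ ^ 2) := by
        rw [← smul_sub, ← sum_sub_distrib]
        exact sqrt_card_mul_norm_average_le _
  _ ≤ √(∑ i, (L * ‖y i - z‖) ^ 2) := by
        gcongr with i
        exact hg i _ _
  _ = L * √(∑ i, ‖y i - z‖ ^ 2) := by
        simp only [mul_pow, ← mul_sum]
        rw [Real.sqrt_mul (sq_nonneg L), Real.sqrt_sq hL]

end Average

theorem sum_sum_smul_eq_sum_of_sum_eq_one {ι M : Type*} [Fintype ι] [AddCommMonoid M]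
    [Module ℝ M] {W : ι → ι → ℝ} (hW : ∀ j, ∑ i, W i j = 1) (v : ι → M) :
    ∑ i, ∑ j, W i j • v j = ∑ j, v j := by
  rw [sum_comm]
  simp only [← sum_smul, hW, one_smul]

theorem diffusion_average_descent_general
    (n d : ℕ) (hn : 1 ≤ n)
    (μ L : ℝ) (hμ : 0 < μ) (hμL : μ ≤ L)
    (f : ℕ → Fin n → EuclideanSpace ℝ (Fin d) → ℝ)
    (g : ℕ → Fin n → EuclideanSpace ℝ (Fin d) → EuclideanSpace ℝ (Fin d))
    (hgrad : ∀ k i x, HasGradientAt (f k i) (g k i x) x)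
    (hsc : ∀ k i x y, (inner ℝ (g k i x - g k i y) (x - y) : ℝ) ≥ μ * ‖x - y‖ ^ 2)
    (hsm : ∀ k i x y, ‖g k i x - g k i y‖ ≤ L * ‖x - y‖)
    (xstar : ℕ → EuclideanSpace ℝ (Fin d))
    (hopt : ∀ k, ∑ i, g k i (xstar k) = 0)
    (Δx : ℝ)
    (hdrift : ∀ k, ‖xstar (k + 1) - xstar k‖ ≤ Δx)
    (W : Fin n → Fin n → ℝ)
    (hWcol : ∀ j, ∑ i, W i j = 1)
    (α : ℝ) (hα0 : 0 < α) (hα : α ≤ 2 / (μ + L))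
    (x : ℕ → Fin n → EuclideanSpace ℝ (Fin d))
    (hx : ∀ k i, x (k + 1) i = ∑ j, W i j • (x k j - α • g (k + 1) j (x k j)))
    (xbar : ℕ → EuclideanSpace ℝ (Fin d))
    (hxbar : ∀ k, xbar k = (n : ℝ)⁻¹ • ∑ i, x k i)
    (k : ℕ) :
    Real.sqrt n * ‖xbar (k + 1) - xstar (k + 1)‖ ≤
      (1 - α * μ / 2) * (Real.sqrt n * ‖xbar k - xstar k‖)
      + α * L * Real.sqrt (∑ i, ‖x k i - xbar k‖ ^ 2)
      + (1 - α * μ / 2) * (Real.sqrt n * Δx) := by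
  have : Nonempty (Fin n) := ⟨⟨0, hn⟩⟩
  set h := fun z => (n : ℝ)⁻¹ • ∑ j, g (k + 1) j z
  set p := (n : ℝ)⁻¹ • ∑ j, g (k + 1) j (x k j)
  have hL : 0 ≤ L := hμ.le.trans hμL
  have hfac : 0 ≤ 1 - α * μ / 2 := by
    have := (le_div_iff₀ (by linarith)).1 hα
    nlinarith
  have hmean : xbar (k + 1) = xbar k - α • p := by
    rw [hxbar, funext (hx k), sum_sum_smul_eq_sum_of_sum_eq_one hWcol, sum_sub_distrib,
      ← smul_sum, hxbar]
    module
  have hcoco := mul_norm_sub_sq_add_norm_sub_sq_le_of_hasGradientAt (h := h) hμL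
    (hasGradientAt_const_mul_sum (hgrad (k + 1)) _)
    (by simpa using mul_norm_sub_sq_le_inner_average_sub fun i a b => (hsc (k + 1) i a b).le)
    (by simpa using norm_average_sub_le (hsm (k + 1))) (xbar k) (xstar (k + 1))
  have hstep := norm_sub_smul_sub_le_of_mul_norm_sq_add_norm_sq_le hμ hμL hα0.le hα
    (by simp [h, hopt]) hcoco (p := p)
  have herr : √n * ‖p - h (xbar k)‖ ≤ L * √(∑ i, ‖x k i - xbar k‖ ^ 2) := by
    simpa using sqrt_card_mul_norm_average_sub_le hL (hsm (k + 1)) (x k) (xbar k)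
  have hdrift' : ‖xbar k - xstar (k + 1)‖ ≤ ‖xbar k - xstar k‖ + Δx :=
    (norm_sub_le_norm_sub_add_norm_sub _ (xstar k) _).trans
      (by rw [norm_sub_rev (xstar k)]; linarith [hdrift k])
  calc √n * ‖xbar (k + 1) - xstar (k + 1)‖
      ≤ √n * ((1 - α * μ / 2) * (‖xbar k - xstar k‖ + Δx) + α * ‖p - h (xbar k)‖) := by
        rw [hmean]
        gcongr
        exact hstep.trans (by gcongr)
    _ = (1 - α * μ / 2) * (√n * ‖xbar k - xstar k‖) + α * (√n * ‖p - h (xbar k)‖)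
          + (1 - α * μ / 2) * (√n * Δx) := by
        ring
    _ ≤ _ := by
        rw [mul_assoc α L]
        gcongr

theorem diffusion_average_descent
    (n d : ℕ) (hn : 1 ≤ n) (hd : 1 ≤ d)
    (μ L : ℝ) (hμ : 0 < μ) (hμL : μ ≤ L)
    (f : ℕ → Fin n → EuclideanSpace ℝ (Fin d) → ℝ)
    (g : ℕ → Fin n → EuclideanSpace ℝ (Fin d) → EuclideanSpace ℝ (Fin d))
    (hgrad : ∀ k i x, HasGradientAt (f k i) (g k i x) x)
    (hsc : ∀ k i x y, (inner ℝ (g k i x - g k i y) (x - y) : ℝ) ≥ μ * ‖x - y‖ ^ 2)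
    (hsm : ∀ k i x y, ‖g k i x - g k i y‖ ≤ L * ‖x - y‖)
    (xstar : ℕ → EuclideanSpace ℝ (Fin d))
    (hopt : ∀ k, ∑ i, g k i (xstar k) = 0)
    (Δx : ℝ) (hΔx : 0 < Δx)
    (hdrift : ∀ k, ‖xstar (k + 1) - xstar k‖ ≤ Δx)
    (W : Fin n → Fin n → ℝ)
    (hWnonneg : ∀ i j, 0 ≤ W i j)
    (hWrow : ∀ i, ∑ j, W i j = 1)
    (hWcol : ∀ j, ∑ i, W i j = 1)
    (α : ℝ) (hα0 : 0 < α) (hα : α ≤ 2 / (μ + L))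
    (x : ℕ → Fin n → EuclideanSpace ℝ (Fin d))
    (hx : ∀ k i, x (k + 1) i = ∑ j, W i j • (x k j - α • g (k + 1) j (x k j)))
    (xbar : ℕ → EuclideanSpace ℝ (Fin d))
    (hxbar : ∀ k, xbar k = (n : ℝ)⁻¹ • ∑ i, x k i)
    (k : ℕ) :
    Real.sqrt n * ‖xbar (k + 1) - xstar (k + 1)‖ ≤
      (1 - α * μ / 2) * (Real.sqrt n * ‖xbar k - xstar k‖)
      + α * L * Real.sqrt (∑ i, ‖x k i - xbar k‖ ^ 2)
      + (1 - α * μ / 2) * (Real.sqrt n * Δx) :=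
  diffusion_average_descent_general n d hn μ L hμ hμL f g hgrad hsc hsm xstar hopt Δx hdrift W hWcol
    α hα0 hα x hx xbar hxbar k
end

section
/- Let A be the 2×2 real matrix A = [[1 − αμ/2, αL], [αβL, β]]. If 0 < α ≤ μ(1−β)/(10L²), then the spectral radius of A satisfies ρ(A) ≤ 1 − 3μα/8 < 1 (every eigenvalue of A has modulus at most 1 − 3μα/8). -/
/-! The eigenvalues are the roots of `z ^ 2 - T * z + D` with `T = tr A` and `D = det A` real.
A non-real pair of roots has modulus `√D`, and a real root lies in `[-r, r]` as soon as the
quadratic is nonnegative at `±r` and its vertex `T / 2` lies in between. For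
`r = 1 - 3μα/8` these conditions follow from the two consequences `10 μα ≤ 1 - β` and
`10 (αL)² ≤ μα(1 - β)` of the step-size bound. -/

open Polynomial in
theorem Matrix.isRoot_charpoly_map_ofReal_fin_two (A : Matrix (Fin 2) (Fin 2) ℝ) (z : ℂ) :
    (A.map (fun r : ℝ => (r : ℂ))).charpoly.IsRoot z ↔ z ^ 2 - A.trace * z + A.det = 0 := by
  simp [charpoly_fin_two, trace_fin_two, det_fin_two]

theorem abs_le_of_quadratic_root {T D r x : ℝ} (hx : x ^ 2 - T * x + D = 0)
    (hTr : |T| ≤ 2 * r) (hr : 0 ≤ r ^ 2 - T * r + D) (hnr : 0 ≤ r ^ 2 + T * r + D) :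
    |x| ≤ r := by
  rw [abs_le] at hTr ⊢
  -- `p x - p (∓r) = (x ± r) (x ∓ r - T)` for `p x = x ^ 2 - T * x + D`, positive outside `[-r, r]`
  constructor
  · by_contra! hlt
    nlinarith [mul_pos_of_neg_of_neg (by linarith : x + r < 0) (by linarith : x - r - T < 0)]
  · by_contra! hlt
    nlinarith [mul_pos (by linarith : 0 < x - r) (by linarith : 0 < x + r - T)]

theorem Complex.norm_le_of_quadratic_root {T D r : ℝ} {z : ℂ} (hz : z ^ 2 - T * z + D = 0)
    (hTr : |T| ≤ 2 * r) (hr : 0 ≤ r ^ 2 - T * r + D) (hnr : 0 ≤ r ^ 2 + T * r + D)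
    (hDr : D ≤ r ^ 2) : ‖z‖ ≤ r := by
  have hre : z.re ^ 2 - z.im ^ 2 - T * z.re + D = 0 := by
    simpa [sq] using congrArg re hz
  have him : z.im * (2 * z.re - T) = 0 := by
    have h := congrArg im hz
    simp only [sq, sub_im, add_im, mul_im, ofReal_re, ofReal_im, zero_im] at h
    linear_combination h
  rcases mul_eq_zero.mp him with hy | hx
  · rw [← re_add_im z, hy, ofReal_zero, zero_mul, add_zero, norm_real, Real.norm_eq_abs]
    exact abs_le_of_quadratic_root (by simpa [hy] using hre) hTr hr hnr
  · have hr0 : 0 ≤ r := by linarith [abs_nonneg T]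
    rw [← pow_le_pow_iff_left₀ (norm_nonneg z) hr0 two_ne_zero, Complex.sq_norm, normSq_apply]
    linear_combination hDr + z.re * hx - hre

theorem diffusion_matrix_spectral_radius_general
    (μ L β α : ℝ) (hμ : 0 < μ) (hμL : μ ≤ L) (hβ0 : 0 < β)
    (hα0 : 0 < α) (hα : α ≤ μ * (1 - β) / (10 * L ^ 2)) :
    (∀ z : ℂ,
      ((!![1 - α * μ / 2, α * L; α * β * L, β] : Matrix (Fin 2) (Fin 2) ℝ).map
        (fun r : ℝ => (r : ℂ))).charpoly.IsRoot z →
      ‖z‖ ≤ 1 - 3 * μ * α / 8) ∧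
    1 - 3 * μ * α / 8 < 1 := by
  have hL : 0 < L := hμ.trans_le hμL
  have hμα0 : 0 < μ * α := mul_pos hμ hα0
  have hαL : 10 * (α * L) ^ 2 ≤ μ * α * (1 - β) := by
    rw [le_div_iff₀ (by positivity)] at hα
    nlinarith
  have hμα : 10 * (μ * α) ≤ 1 - β := by
    have hsq : (μ * α) ^ 2 ≤ (α * L) ^ 2 := by
      rw [mul_comm α L]; gcongr
    refine le_of_mul_le_mul_left ?_ hμα0
    nlinarith
  refine ⟨fun z hz => ?_, by linarith⟩
  rw [Matrix.isRoot_charpoly_map_ofReal_fin_two, Matrix.trace_fin_two, Matrix.det_fin_two] at hz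
  simp only [Matrix.of_apply, Matrix.cons_val', Matrix.cons_val_zero, Matrix.cons_val_one,
    Matrix.empty_val', Matrix.cons_val_fin_one] at hz
  refine Complex.norm_le_of_quadratic_root hz ?_ ?_ ?_ ?_
  · rw [abs_le]; constructor <;> nlinarith
  all_goals nlinarith

theorem diffusion_matrix_spectral_radius
    (μ L β α : ℝ) (hμ : 0 < μ) (hμL : μ ≤ L) (hβ0 : 0 < β) (hβ1 : β < 1)
    (hα0 : 0 < α) (hα : α ≤ μ * (1 - β) / (10 * L ^ 2)) :
    (∀ z : ℂ,
      ((!![1 - α * μ / 2, α * L; α * β * L, β] : Matrix (Fin 2) (Fin 2) ℝ).map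
        (fun r : ℝ => (r : ℂ))).charpoly.IsRoot z →
      ‖z‖ ≤ 1 - 3 * μ * α / 8) ∧
    1 - 3 * μ * α / 8 < 1 :=
  diffusion_matrix_spectral_radius_general μ L β α hμ hμL hβ0 hα0 hα
end

section
/- For the DGT iterates: if the step-size satisfies 0 < α ≤ 2/(μ + L), then for every time k ∈ ℕ, √n·‖x̄^{k+1} − x̃^{(k+1)*}‖ ≤ (1 − αμ/2)·√n·‖x̄^k − x̃^{k*}‖ + αL·(Σ_{i=1}^n ‖x_i^k − x̄^k‖²)^{1/2} + √n·Δ_x. -/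
/-!
Summing the DGT recursion over the agents, the unit column sums of `W` cancel the mixing and
make `∑ᵢ yᵢᵏ = ∑ᵢ ∇fᵢᵏ(xᵢᵏ)`. Hence `x̄ᵏ⁺¹ = x̄ᵏ - α · (1/n) ∑ᵢ ∇fᵢᵏ(xᵢᵏ)`, which is
a gradient step on the averaged objective at `x̄ᵏ` plus an error
`α · (1/n) ∑ᵢ (∇fᵢᵏ(x̄ᵏ) - ∇fᵢᵏ(xᵢᵏ))` controlled by `L` and the consensus distance. The averaged
gradient inherits Nesterov's interpolation inequality
`‖∇F x - ∇F y‖² + μL‖x - y‖² ≤ (μ + L)⟪∇F x - ∇F y, x - y⟫` from the agents' gradients, and for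
`α ≤ 2/(μ + L)` this inequality makes the gradient step a `(1 - αμ/2)`-contraction towards the
minimiser `x̃ᵏ*`. The drift of the minimiser contributes `Δₓ`.
-/

section NormedAddCommGroup

variable {E : Type*} [NormedAddCommGroup E]

theorem sum_norm_le_sqrt_card_mul_sqrt_sum_sq {ι : Type*} [Fintype ι] (v : ι → E) :
    ∑ i, ‖v i‖ ≤ √(Fintype.card ι) * √(∑ i, ‖v i‖ ^ 2) := by
  simpa using Real.sum_mul_le_sqrt_mul_sqrt Finset.univ (fun _ => 1) (fun i => ‖v i‖)

theorem sq_norm_sum_le_card_mul_sum_sq {ι : Type*} [Fintype ι] (v : ι → E) :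
    ‖∑ i, v i‖ ^ 2 ≤ Fintype.card ι * ∑ i, ‖v i‖ ^ 2 := by
  have h := (norm_sum_le Finset.univ v).trans (sum_norm_le_sqrt_card_mul_sqrt_sum_sq v)
  calc ‖∑ i, v i‖ ^ 2 ≤ (√(Fintype.card ι) * √(∑ i, ‖v i‖ ^ 2)) ^ 2 :=
        pow_le_pow_left₀ (norm_nonneg _) h 2
    _ = Fintype.card ι * ∑ i, ‖v i‖ ^ 2 := by
        rw [mul_pow, Real.sq_sqrt (Nat.cast_nonneg _),
          Real.sq_sqrt (Finset.sum_nonneg fun i _ => sq_nonneg _)]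

theorem sqrt_card_mul_norm_inv_smul_sum_sub_le [NormedSpace ℝ E] {ι : Type*} [Fintype ι]
    [Nonempty ι] {G : ι → E → E} {L : ℝ} (hL : 0 ≤ L) (hG : ∀ i a b, ‖G i a - G i b‖ ≤ L * ‖a - b‖)
    (z : E) (x : ι → E) :
    √(Fintype.card ι) * ‖(Fintype.card ι : ℝ)⁻¹ • ∑ i, (G i z - G i (x i))‖ ≤
      L * √(∑ i, ‖x i - z‖ ^ 2) := by
  set n : ℝ := (Fintype.card ι : ℝ)
  have hn : 0 < n := Nat.cast_pos.2 Fintype.card_pos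
  have hsum : ‖∑ i, (G i z - G i (x i))‖ ≤ L * (√n * √(∑ i, ‖x i - z‖ ^ 2)) :=
    calc ‖∑ i, (G i z - G i (x i))‖ ≤ ∑ i, L * ‖x i - z‖ :=
          (norm_sum_le _ _).trans (Finset.sum_le_sum fun i _ => norm_sub_rev z (x i) ▸ hG i _ _)
      _ = L * ∑ i, ‖x i - z‖ := (Finset.mul_sum _ _ _).symm
      _ ≤ L * (√n * √(∑ i, ‖x i - z‖ ^ 2)) :=
          mul_le_mul_of_nonneg_left (sum_norm_le_sqrt_card_mul_sqrt_sum_sq _) hL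
  calc √n * ‖n⁻¹ • ∑ i, (G i z - G i (x i))‖
      = √n * n⁻¹ * ‖∑ i, (G i z - G i (x i))‖ := by
        rw [norm_smul, norm_inv, Real.norm_eq_abs, abs_of_pos hn, mul_assoc]
    _ ≤ √n * n⁻¹ * (L * (√n * √(∑ i, ‖x i - z‖ ^ 2))) := by gcongr
    _ = (√n * √n) * n⁻¹ * (L * √(∑ i, ‖x i - z‖ ^ 2)) := by ring
    _ = L * √(∑ i, ‖x i - z‖ ^ 2) := by
        rw [Real.mul_self_sqrt hn.le, mul_inv_cancel₀ hn.ne', one_mul]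

end NormedAddCommGroup

section InnerProductSpace

variable {E : Type*} [NormedAddCommGroup E] [InnerProductSpace ℝ E]

local notation "⟪" a ", " b "⟫" => (inner ℝ a b : ℝ)

theorem sq_norm_sub_le_mul_inner_of_quadratic_bounds {F : E → ℝ} {G : E → E} {c : ℝ}
    (hc : 0 < c) (hlow : ∀ a b, F a + ⟪G a, b - a⟫ ≤ F b)
    (hup : ∀ a b, F b ≤ F a + ⟪G a, b - a⟫ + c / 2 * ‖b - a‖ ^ 2) (x y : E) :
    ‖G x - G y‖ ^ 2 ≤ c * ⟪G x - G y, x - y⟫ := by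
  -- compare both bounds at the point `z` where the upper bound around `b` is minimised
  have key : ∀ a b, F a + ⟪G a, b - a⟫ + c⁻¹ / 2 * ‖G b - G a‖ ^ 2 ≤ F b := by
    intro a b
    set z := b - c⁻¹ • (G b - G a)
    have h1 := hlow a z
    have h2 := hup b z
    have hza : z - a = (b - a) - c⁻¹ • (G b - G a) := by simp only [z]; abel
    have hzb : z - b = -(c⁻¹ • (G b - G a)) := by simp only [z]; abel
    rw [hza, inner_sub_right, real_inner_smul_right] at h1
    rw [hzb, inner_neg_right, real_inner_smul_right, norm_neg, norm_smul, Real.norm_eq_abs,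
      abs_of_pos (inv_pos.2 hc), mul_pow] at h2
    have hsq : c⁻¹ * ⟪G b, G b - G a⟫ - c⁻¹ * ⟪G a, G b - G a⟫ = c⁻¹ * ‖G b - G a‖ ^ 2 := by
      rw [← mul_sub, ← inner_sub_left, real_inner_self_eq_norm_sq]
    have hc' : c / 2 * (c⁻¹ ^ 2 * ‖G b - G a‖ ^ 2) = c⁻¹ / 2 * ‖G b - G a‖ ^ 2 := by
      field_simp
    linarith
  have hxy := key x y
  have hyx := key y x
  rw [norm_sub_rev] at hxy
  have hinner : ⟪G x - G y, x - y⟫ = -(⟪G x, y - x⟫ + ⟪G y, x - y⟫) := by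
    rw [inner_sub_left, ← neg_sub x y, inner_neg_right]; ring
  have : c⁻¹ * ‖G x - G y‖ ^ 2 ≤ ⟪G x - G y, x - y⟫ := by rw [hinner]; linarith
  calc ‖G x - G y‖ ^ 2 = c * (c⁻¹ * ‖G x - G y‖ ^ 2) := by field_simp
    _ ≤ c * ⟪G x - G y, x - y⟫ := mul_le_mul_of_nonneg_left this hc.le

/-- The inequality of Nesterov's *Introductory Lectures on Convex Optimization*, Thm. 2.1.12,
satisfied by the gradient of a `μ`-strongly convex, `L`-smooth function. -/
def NesterovInterpolation (μ L : ℝ) (G : E → E) : Prop :=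
  ∀ x y, ‖G x - G y‖ ^ 2 + μ * L * ‖x - y‖ ^ 2 ≤ (μ + L) * ⟪G x - G y, x - y⟫

namespace NesterovInterpolation

variable {μ L : ℝ}

theorem average {ι : Type*} [Fintype ι] [Nonempty ι] {G : ι → E → E}
    (hG : ∀ i, NesterovInterpolation μ L (G i)) :
    NesterovInterpolation μ L (fun z => (Fintype.card ι : ℝ)⁻¹ • ∑ i, G i z) := by
  intro x y
  set n : ℝ := (Fintype.card ι : ℝ)
  have hn : 0 < n := Nat.cast_pos.2 Fintype.card_pos
  have hdiff : n⁻¹ • ∑ i, G i x - n⁻¹ • ∑ i, G i y = n⁻¹ • ∑ i, (G i x - G i y) := by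
    rw [← smul_sub, Finset.sum_sub_distrib]
  have hsum := Finset.sum_le_sum fun i (_ : i ∈ Finset.univ) => hG i x y
  rw [Finset.sum_add_distrib, ← Finset.mul_sum, ← Finset.mul_sum, ← sum_inner, Finset.sum_const,
    Finset.card_univ, nsmul_eq_mul] at hsum
  have hjensen := sq_norm_sum_le_card_mul_sum_sq fun i => G i x - G i y
  beta_reduce
  rw [hdiff, norm_smul, mul_pow, real_inner_smul_left, norm_inv, Real.norm_eq_abs,
    abs_of_pos hn]
  have hQ := (inv_mul_le_iff₀ hn).2 hjensen
  calc n⁻¹ ^ 2 * ‖∑ i, (G i x - G i y)‖ ^ 2 + μ * L * ‖x - y‖ ^ 2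
      = n⁻¹ * (n⁻¹ * ‖∑ i, (G i x - G i y)‖ ^ 2 + μ * L * (n * ‖x - y‖ ^ 2)) := by
        field_simp
    _ ≤ n⁻¹ * ((μ + L) * ⟪∑ i, (G i x - G i y), x - y⟫) := by gcongr; linarith
    _ = (μ + L) * (n⁻¹ * ⟪∑ i, (G i x - G i y), x - y⟫) := by ring

theorem norm_sub_smul_sub_le {G : E → E} (hG : NesterovInterpolation μ L G) (hμ : 0 < μ)
    (hμL : μ ≤ L) {α : ℝ} (hα0 : 0 ≤ α) (hα : α ≤ 2 / (μ + L)) (x y : E) :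
    ‖(x - α • G x) - (y - α • G y)‖ ≤ (1 - α * μ / 2) * ‖x - y‖ := by
  have hs : 0 < μ + L := by linarith
  have hαs : α * (μ + L) ≤ 2 := (le_div_iff₀ hs).1 hα
  have hαμ : α * μ ≤ 1 := by nlinarith
  have hstep : (x - α • G x) - (y - α • G y) = (x - y) - α • (G x - G y) := by
    rw [smul_sub]; abel
  have hexp : ‖(x - y) - α • (G x - G y)‖ ^ 2 =
      ‖x - y‖ ^ 2 - 2 * α * ⟪G x - G y, x - y⟫ + α ^ 2 * ‖G x - G y‖ ^ 2 := by
    rw [norm_sub_sq_real, real_inner_smul_right, norm_smul, Real.norm_eq_abs, mul_pow, sq_abs,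
      real_inner_comm]
    ring
  have hsq : ‖(x - y) - α • (G x - G y)‖ ^ 2 ≤ ((1 - α * μ / 2) * ‖x - y‖) ^ 2 := by
    refine le_of_mul_le_mul_left ?_ hs
    have h1 := mul_le_mul_of_nonneg_left (hG x y) (by positivity : 0 ≤ 2 * α)
    have h2 : 0 ≤ α * ‖G x - G y‖ ^ 2 * (2 - α * (μ + L)) := by
      have := sub_nonneg.2 hαs; positivity
    have h3 : 0 ≤ α * μ * ((L - μ) + (μ + L) * (α * μ) / 4) * ‖x - y‖ ^ 2 := by
      have := sub_nonneg.2 hμL; positivity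
    rw [hexp]
    nlinarith
  rw [hstep]
  exact le_of_pow_le_pow_left₀ two_ne_zero (mul_nonneg (by linarith) (norm_nonneg _)) hsq

end NesterovInterpolation

end InnerProductSpace

section Gradient

variable {E : Type*} [NormedAddCommGroup E] [InnerProductSpace ℝ E] [CompleteSpace E]
  {f : E → ℝ} {g : E → E}

local notation "⟪" a ", " b "⟫" => (inner ℝ a b : ℝ)

theorem hasDerivAt_comp_add_smul_of_hasGradientAt (hf : ∀ z, HasGradientAt f (g z) z) (x u : E)
    (t : ℝ) : HasDerivAt (fun s : ℝ => f (x + s • u)) ⟪g (x + t • u), u⟫ t := by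
  have hline : HasDerivAt (fun s : ℝ => x + s • u) u t := by
    simpa using ((hasDerivAt_id t).smul_const u).const_add x
  have := (hf (x + t • u)).hasFDerivAt.comp_hasDerivAt t hline
  simp only [InnerProductSpace.toDual_apply_apply] at this
  exact this

theorem le_add_inner_add_of_inner_sub_le {c : ℝ} (hf : ∀ z, HasGradientAt f (g z) z)
    (hg : ∀ a b, ⟪g a - g b, a - b⟫ ≤ c * ‖a - b‖ ^ 2) (x y : E) :
    f y ≤ f x + ⟪g x, y - x⟫ + c / 2 * ‖y - x‖ ^ 2 := by
  set u := y - x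
  let φ : ℝ → ℝ := fun t => f (x + t • u) - t * ⟪g x, u⟫ - c / 2 * t ^ 2 * ‖u‖ ^ 2
  let φ' : ℝ → ℝ := fun t => ⟪g (x + t • u) - g x, u⟫ - c * t * ‖u‖ ^ 2
  have hφ : ∀ t, HasDerivAt φ (φ' t) t := fun t => by
    refine (((hasDerivAt_comp_add_smul_of_hasGradientAt hf x u t).sub
      ((hasDerivAt_id t).mul_const ⟪g x, u⟫)).sub
      (((hasDerivAt_pow 2 t).const_mul (c / 2)).mul_const (‖u‖ ^ 2))).congr_deriv ?_
    simp only [φ', inner_sub_left]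
    push_cast
    ring
  -- `t * φ' t ≤ 0` is `hg` at the pair `x + t • u`, `x`
  have hφ'_nonpos : ∀ t ∈ interior (Set.Icc (0 : ℝ) 1), φ' t ≤ 0 := by
    intro t ht
    rw [interior_Icc] at ht
    have h := hg (x + t • u) x
    rw [add_sub_cancel_left, real_inner_smul_right, norm_smul, Real.norm_eq_abs, mul_pow,
      sq_abs] at h
    have : t * φ' t ≤ 0 := by simp only [φ', inner_sub_left] at h ⊢; nlinarith
    exact nonpos_of_mul_nonpos_right this ht.1
  have hanti : AntitoneOn φ (Set.Icc 0 1) :=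
    antitoneOn_of_hasDerivWithinAt_nonpos (convex_Icc 0 1)
      (fun t _ => (hφ t).continuousAt.continuousWithinAt)
      (fun t _ => (hφ t).hasDerivWithinAt) hφ'_nonpos
  have h01 := hanti (Set.left_mem_Icc.2 zero_le_one) (Set.right_mem_Icc.2 zero_le_one) zero_le_one
  simp only [φ, u, one_smul, zero_smul, add_zero, add_sub_cancel] at h01
  linarith

theorem add_inner_add_le_of_le_inner_sub {c : ℝ} (hf : ∀ z, HasGradientAt f (g z) z)
    (hg : ∀ a b, c * ‖a - b‖ ^ 2 ≤ ⟪g a - g b, a - b⟫) (x y : E) :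
    f x + ⟪g x, y - x⟫ + c / 2 * ‖y - x‖ ^ 2 ≤ f y := by
  have hneg : ∀ z, HasGradientAt (fun z => -f z) (-g z) z := fun z => by
    rw [hasGradientAt_iff_hasFDerivAt, map_neg]
    exact (hf z).hasFDerivAt.neg
  have := le_add_inner_add_of_inner_sub_le (c := -c) hneg
    (fun a b => by rw [← neg_sub', inner_neg_left]; linarith [hg a b]) x y
  rw [inner_neg_left] at this
  linarith

theorem nesterovInterpolation_of_hasGradientAt {μ L : ℝ} (hμ : 0 ≤ μ) (hμL : μ ≤ L)
    (hf : ∀ z, HasGradientAt f (g z) z)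
    (hsc : ∀ a b, μ * ‖a - b‖ ^ 2 ≤ ⟪g a - g b, a - b⟫)
    (hsm : ∀ a b, ‖g a - g b‖ ≤ L * ‖a - b‖) :
    NesterovInterpolation μ L g := by
  intro x y
  rcases hμL.lt_or_eq with hlt | rfl
  · -- cocoercivity of the convex, `(L - μ)`-smooth function `f - μ/2 ‖·‖²`
    have hsq : ∀ a b : E, ‖b‖ ^ 2 = ‖a‖ ^ 2 + 2 * ⟪a, b - a⟫ + ‖b - a‖ ^ 2 := fun a b => by
      rw [← norm_add_sq_real, add_sub_cancel]
    have hG : ∀ a b : E, ⟪g a - μ • a, b - a⟫ = ⟪g a, b - a⟫ - μ * ⟪a, b - a⟫ := fun a b => by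
      rw [inner_sub_left, real_inner_smul_left]
    have hsm' : ∀ a b, ⟪g a - g b, a - b⟫ ≤ L * ‖a - b‖ ^ 2 := fun a b => by
      have := real_inner_le_norm (g a - g b) (a - b)
      have := mul_le_mul_of_nonneg_right (hsm a b) (norm_nonneg (a - b))
      nlinarith
    have hco := sq_norm_sub_le_mul_inner_of_quadratic_bounds (F := fun z => f z - μ / 2 * ‖z‖ ^ 2)
      (G := fun z => g z - μ • z) (sub_pos.2 hlt)
      (fun a b => by
        simp only [hG]
        linear_combination add_inner_add_le_of_le_inner_sub hf hsc a b + μ / 2 * hsq a b)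
      (fun a b => by
        simp only [hG]
        linear_combination le_add_inner_add_of_inner_sub_le hf hsm' a b - μ / 2 * hsq a b) x y
    have hGxy : g x - μ • x - (g y - μ • y) = (g x - g y) - μ • (x - y) := by
      rw [smul_sub]; abel
    have hexp : ‖(g x - g y) - μ • (x - y)‖ ^ 2
        = ‖g x - g y‖ ^ 2 - 2 * μ * ⟪g x - g y, x - y⟫ + μ ^ 2 * ‖x - y‖ ^ 2 := by
      rw [norm_sub_sq_real, real_inner_smul_right, norm_smul, Real.norm_eq_abs, mul_pow, sq_abs]
      ring
    have hinner : ⟪(g x - g y) - μ • (x - y), x - y⟫ = ⟪g x - g y, x - y⟫ - μ * ‖x - y‖ ^ 2 := by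
      rw [inner_sub_left, real_inner_smul_left, real_inner_self_eq_norm_sq]
    beta_reduce at hco
    rw [hGxy, hexp, hinner] at hco
    linarith
  · have := mul_self_le_mul_self (norm_nonneg _) (hsm x y)
    nlinarith [mul_nonneg hμ (sub_nonneg.2 (hsc x y))]

end Gradient

section GradientTracking

variable {R ι M : Type*} [Semiring R] [Fintype ι] [AddCommGroup M] [Module R M] {W : ι → ι → R}

theorem sum_sum_smul_eq_sum_of_sum_col_eq_one (hWcol : ∀ j, ∑ i, W i j = 1) (v : ι → M) :
    ∑ i, ∑ j, W i j • v j = ∑ j, v j := by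
  rw [Finset.sum_comm]
  exact Finset.sum_congr rfl fun j _ => by rw [← Finset.sum_smul, hWcol, one_smul]

theorem sum_tracking_eq_sum (hWcol : ∀ j, ∑ i, W i j = 1) {y h : ℕ → ι → M}
    (hy0 : ∀ i, y 0 i = h 0 i)
    (hy : ∀ k i, y (k + 1) i = (∑ j, W i j • y k j) + h (k + 1) i - h k i) (k : ℕ) :
    ∑ i, y k i = ∑ i, h k i := by
  induction k with
  | zero => exact Finset.sum_congr rfl fun i _ => hy0 i
  | succ k ih =>
    simp only [hy, Finset.sum_sub_distrib, Finset.sum_add_distrib,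
      sum_sum_smul_eq_sum_of_sum_col_eq_one hWcol, ih, add_sub_cancel_left]

theorem sum_consensus_step (hWcol : ∀ j, ∑ i, W i j = 1) {x y : ℕ → ι → M} (α : R)
    (hx : ∀ k i, x (k + 1) i = ∑ j, W i j • (x k j - α • y k j)) (k : ℕ) :
    ∑ i, x (k + 1) i = ∑ i, x k i - α • ∑ i, y k i := by
  simp only [hx, sum_sum_smul_eq_sum_of_sum_col_eq_one hWcol, Finset.sum_sub_distrib,
    Finset.smul_sum]

end GradientTracking

theorem dgt_average_descent_general
    (n d : ℕ) (hn : 1 ≤ n)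
    (μ L : ℝ) (hμ : 0 < μ) (hμL : μ ≤ L)
    (f : ℕ → Fin n → EuclideanSpace ℝ (Fin d) → ℝ)
    (g : ℕ → Fin n → EuclideanSpace ℝ (Fin d) → EuclideanSpace ℝ (Fin d))
    (hgrad : ∀ k i x, HasGradientAt (f k i) (g k i x) x)
    (hsc : ∀ k i x y, (inner ℝ (g k i x - g k i y) (x - y) : ℝ) ≥ μ * ‖x - y‖ ^ 2)
    (hsm : ∀ k i x y, ‖g k i x - g k i y‖ ≤ L * ‖x - y‖)
    (xstar : ℕ → EuclideanSpace ℝ (Fin d))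
    (hopt : ∀ k, ∑ i, g k i (xstar k) = 0)
    (Δx : ℝ)
    (hdrift : ∀ k, ‖xstar (k + 1) - xstar k‖ ≤ Δx)
    (W : Fin n → Fin n → ℝ)
    (hWcol : ∀ j, ∑ i, W i j = 1)
    (α : ℝ) (hα0 : 0 < α) (hα : α ≤ 2 / (μ + L))
    (x y : ℕ → Fin n → EuclideanSpace ℝ (Fin d))
    (hy0 : ∀ i, y 0 i = g 0 i (x 0 i))
    (hx : ∀ k i, x (k + 1) i = ∑ j, W i j • (x k j - α • y k j))
    (hy : ∀ k i, y (k + 1) i =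
      (∑ j, W i j • y k j) + g (k + 1) i (x (k + 1) i) - g k i (x k i))
    (xbar : ℕ → EuclideanSpace ℝ (Fin d))
    (hxbar : ∀ k, xbar k = (n : ℝ)⁻¹ • ∑ i, x k i)
    (k : ℕ) :
    Real.sqrt n * ‖xbar (k + 1) - xstar (k + 1)‖ ≤
      (1 - α * μ / 2) * (Real.sqrt n * ‖xbar k - xstar k‖)
      + α * L * Real.sqrt (∑ i, ‖x k i - xbar k‖ ^ 2)
      + Real.sqrt n * Δx := by
  have : Nonempty (Fin n) := ⟨⟨0, hn⟩⟩
  set G := fun z => (n : ℝ)⁻¹ • ∑ i, g k i z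
  have hG : NesterovInterpolation μ L G := by
    simpa only [Fintype.card_fin] using NesterovInterpolation.average fun i =>
      nesterovInterpolation_of_hasGradientAt hμ.le hμL (hgrad k i) (hsc k i) (hsm k i)
  have hdecomp : xbar (k + 1) - xstar (k + 1) =
      ((xbar k - α • G (xbar k)) - (xstar k - α • G (xstar k)))
      + α • (n : ℝ)⁻¹ • ∑ i, (g k i (xbar k) - g k i (x k i))
      + (xstar k - xstar (k + 1)) := by
    have hsum_y := sum_tracking_eq_sum hWcol (h := fun k i => g k i (x k i)) hy0 hy k
    rw [hxbar, hxbar, sum_consensus_step hWcol α hx, hsum_y]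
    simp only [G, hopt k, Finset.sum_sub_distrib]
    module
  have hcontr := hG.norm_sub_smul_sub_le hμ hμL hα0.le hα (xbar k) (xstar k)
  have hcons : Real.sqrt n * ‖(n : ℝ)⁻¹ • ∑ i, (g k i (xbar k) - g k i (x k i))‖ ≤
      L * Real.sqrt (∑ i, ‖x k i - xbar k‖ ^ 2) := by
    simpa only [Fintype.card_fin] using
      sqrt_card_mul_norm_inv_smul_sum_sub_le (hμ.le.trans hμL) (hsm k) (xbar k) (x k)
  have hdrift' : ‖xstar k - xstar (k + 1)‖ ≤ Δx := by rw [norm_sub_rev]; exact hdrift k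
  calc Real.sqrt n * ‖xbar (k + 1) - xstar (k + 1)‖
      ≤ Real.sqrt n * ((1 - α * μ / 2) * ‖xbar k - xstar k‖
        + α * ‖(n : ℝ)⁻¹ • ∑ i, (g k i (xbar k) - g k i (x k i))‖ + Δx) := by
        rw [hdecomp, ← norm_smul_of_nonneg hα0.le]
        gcongr
        exact norm_add₃_le.trans (by gcongr)
    _ ≤ _ := by linarith [mul_le_mul_of_nonneg_left hcons hα0.le]

theorem dgt_average_descent
    (n d : ℕ) (hn : 1 ≤ n) (hd : 1 ≤ d)
    (μ L : ℝ) (hμ : 0 < μ) (hμL : μ ≤ L)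
    (f : ℕ → Fin n → EuclideanSpace ℝ (Fin d) → ℝ)
    (g : ℕ → Fin n → EuclideanSpace ℝ (Fin d) → EuclideanSpace ℝ (Fin d))
    (hgrad : ∀ k i x, HasGradientAt (f k i) (g k i x) x)
    (hsc : ∀ k i x y, (inner ℝ (g k i x - g k i y) (x - y) : ℝ) ≥ μ * ‖x - y‖ ^ 2)
    (hsm : ∀ k i x y, ‖g k i x - g k i y‖ ≤ L * ‖x - y‖)
    (xstar : ℕ → EuclideanSpace ℝ (Fin d))
    (hopt : ∀ k, ∑ i, g k i (xstar k) = 0)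
    (Δx : ℝ) (hΔx : 0 < Δx)
    (hdrift : ∀ k, ‖xstar (k + 1) - xstar k‖ ≤ Δx)
    (W : Fin n → Fin n → ℝ)
    (hWnonneg : ∀ i j, 0 ≤ W i j)
    (hWrow : ∀ i, ∑ j, W i j = 1)
    (hWcol : ∀ j, ∑ i, W i j = 1)
    (β : ℝ) (hβ0 : 0 ≤ β) (hβ1 : β < 1)
    (hβ : ∀ v : Fin n → EuclideanSpace ℝ (Fin d), (∑ i, v i) = 0 →
      Real.sqrt (∑ i, ‖∑ j, W i j • v j‖ ^ 2) ≤ β * Real.sqrt (∑ i, ‖v i‖ ^ 2))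
    (α : ℝ) (hα0 : 0 < α) (hα : α ≤ 2 / (μ + L))
    (x y : ℕ → Fin n → EuclideanSpace ℝ (Fin d))
    (hy0 : ∀ i, y 0 i = g 0 i (x 0 i))
    (hx : ∀ k i, x (k + 1) i = ∑ j, W i j • (x k j - α • y k j))
    (hy : ∀ k i, y (k + 1) i =
      (∑ j, W i j • y k j) + g (k + 1) i (x (k + 1) i) - g k i (x k i))
    (xbar : ℕ → EuclideanSpace ℝ (Fin d))
    (hxbar : ∀ k, xbar k = (n : ℝ)⁻¹ • ∑ i, x k i)
    (k : ℕ) :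
    Real.sqrt n * ‖xbar (k + 1) - xstar (k + 1)‖ ≤
      (1 - α * μ / 2) * (Real.sqrt n * ‖xbar k - xstar k‖)
      + α * L * Real.sqrt (∑ i, ‖x k i - xbar k‖ ^ 2)
      + Real.sqrt n * Δx :=
  dgt_average_descent_general n d hn μ L hμ hμL f g hgrad hsc hsm xstar hopt Δx hdrift W hWcol α hα0
    hα x y hy0 hx hy xbar hxbar k
end

section
/- Let A be the 3×3 real matrix A = [[(1+β)/2, 5L, 3L], [αβ, β, 0], [0, αL, 1 − αμ/2]]. If 0 < α ≤ (1−β)²μ/(768L²), then the spectral radius of A satisfies ρ(A) ≤ 1 − αμ/4 < 1 (every eigenvalue of A has modulus at most 1 − αμ/4). -/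
/-!
Conjugating by `D = diag(17L/(1-β), μ/(4L), 1)` does not change the characteristic polynomial, and
Gershgorin's theorem for `D⁻¹AD` bounds every eigenvalue by a weighted row sum
`∑ⱼ |aₖⱼ| dⱼ / dₖ`. For these weights each of the three row sums is at most `1 - αμ/4` under the
step-size condition (the last one equals it).
-/

open Matrix

namespace Matrix

variable {n : Type*} [Fintype n] [DecidableEq n]

theorem exists_norm_le_sum_norm_of_isRoot_charpoly {K : Type*} [NormedField K]
    {A : Matrix n n K} {z : K} (hz : A.charpoly.IsRoot z) : ∃ k, ‖z‖ ≤ ∑ j, ‖A k j‖ := by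
  have hz' : Module.End.HasEigenvalue (toLin' A) z := by
    rwa [Module.End.hasEigenvalue_iff_mem_spectrum, spectrum_toLin',
      mem_spectrum_iff_isRoot_charpoly]
  obtain ⟨k, hk⟩ := eigenvalue_mem_ball hz'
  rw [mem_closedBall_iff_norm] at hk
  refine ⟨k, ?_⟩
  rw [← Finset.add_sum_erase _ _ (Finset.mem_univ k)]
  linarith [norm_le_norm_add_norm_sub' z (A k k)]

theorem charpoly_diagonal_inv_mul_mul_diagonal {K : Type*} [Field K] (A : Matrix n n K)
    {d : n → K} (hd : ∀ i, d i ≠ 0) :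
    (diagonal d⁻¹ * A * diagonal d).charpoly = A.charpoly := by
  have : diagonal d * diagonal d⁻¹ = 1 := by
    rw [diagonal_mul_diagonal, ← diagonal_one]
    exact congrArg diagonal (funext fun i => mul_inv_cancel₀ (hd i))
  rw [charpoly_mul_comm, ← Matrix.mul_assoc, this, Matrix.one_mul]

theorem exists_norm_le_sum_norm_mul_div_of_isRoot_charpoly {K : Type*} [NormedField K]
    {A : Matrix n n K} {d : n → K} (hd : ∀ i, d i ≠ 0) {z : K} (hz : A.charpoly.IsRoot z) :
    ∃ k, ‖z‖ ≤ ∑ j, ‖A k j‖ * ‖d j‖ / ‖d k‖ := by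
  rw [← charpoly_diagonal_inv_mul_mul_diagonal A hd] at hz
  obtain ⟨k, hk⟩ := exists_norm_le_sum_norm_of_isRoot_charpoly hz
  refine ⟨k, hk.trans_eq (Finset.sum_congr rfl fun j _ => ?_)⟩
  rw [mul_diagonal, diagonal_mul, Pi.inv_apply, norm_mul, norm_mul, norm_inv]
  ring

theorem exists_norm_le_sum_abs_mul_div_of_isRoot_charpoly_map {A : Matrix n n ℝ} {w : n → ℝ}
    (hw : ∀ i, 0 < w i) {z : ℂ} (hz : (A.map (↑)).charpoly.IsRoot z) :
    ∃ k, ‖z‖ ≤ ∑ j, |A k j| * w j / w k := by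
  obtain ⟨k, hk⟩ := exists_norm_le_sum_norm_mul_div_of_isRoot_charpoly
    (d := fun i => (w i : ℂ)) (fun i => Complex.ofReal_ne_zero.mpr (hw i).ne') hz
  refine ⟨k, hk.trans_eq (Finset.sum_congr rfl fun j _ => ?_)⟩
  simp [abs_of_pos (hw j), abs_of_pos (hw k)]

end Matrix

theorem dgt_weighted_row_sum_le {μ L β α : ℝ} (hμ : 0 < μ) (hμL : μ ≤ L) (hβ0 : 0 < β)
    (hβ1 : β < 1) (hα0 : 0 < α) (hα : α ≤ (1 - β) ^ 2 * μ / (768 * L ^ 2)) (k : Fin 3) :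
    ∑ j, |!![(1 + β) / 2, 5 * L, 3 * L; α * β, β, 0; 0, α * L, 1 - α * μ / 2] k j| *
      ![17 * L / (1 - β), μ / (4 * L), 1] j / ![17 * L / (1 - β), μ / (4 * L), 1] k ≤
      1 - α * μ / 4 := by
  have hL : 0 < L := hμ.trans_le hμL
  have hβ : 0 < 1 - β := sub_pos.mpr hβ1
  have hαL : α * L ^ 2 * 768 ≤ (1 - β) ^ 2 * μ := by
    rw [le_div_iff₀ (by positivity)] at hα; linarith
  have hαμ : α * μ * 768 ≤ 1 - β := by
    have : α * μ * 768 ≤ (1 - β) ^ 2 := by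
      refine le_of_mul_le_mul_right ?_ (by positivity : 0 < L ^ 2)
      nlinarith [mul_le_mul_of_nonneg_right hαL hμ.le, mul_le_mul hμL hμL hμ.le hL.le]
    nlinarith
  have hdiag : 0 ≤ 1 - α * μ / 2 := by linarith
  fin_cases k <;>
    simp only [Fin.zero_eta, Fin.mk_one, Fin.reduceFinMk, Fin.isValue, of_apply, cons_val',
      cons_val_fin_one, cons_val_zero, cons_val_one, cons_val, Fin.sum_univ_three, abs_zero,
      zero_mul, zero_div, zero_add, add_zero, mul_one, div_one, abs_of_nonneg hdiag, abs_of_pos,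
      mul_pos_iff_of_pos_left, Nat.ofNat_pos, hL, hα0, hβ0,
      (by positivity : 0 < (1 + β) / 2)] <;>
    field_simp
  · nlinarith [mul_le_mul_of_nonneg_left hμL hβ.le, mul_le_mul_of_nonneg_left hαμ hL.le]
  · nlinarith [mul_le_mul_of_nonneg_left hαμ (mul_pos hβ hμ).le,
      mul_le_mul_of_nonneg_left hαL hβ0.le,
      mul_le_mul_of_nonneg_right hβ1.le (by positivity : 0 ≤ (1 - β) ^ 2 * μ)]
  · linarith

theorem dgt_matrix_spectral_radius
    (μ L β α : ℝ) (hμ : 0 < μ) (hμL : μ ≤ L) (hβ0 : 0 < β) (hβ1 : β < 1)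
    (hα0 : 0 < α) (hα : α ≤ (1 - β) ^ 2 * μ / (768 * L ^ 2)) :
    (∀ z : ℂ,
      ((!![(1 + β) / 2, 5 * L, 3 * L;
           α * β, β, 0;
           0, α * L, 1 - α * μ / 2] : Matrix (Fin 3) (Fin 3) ℝ).map
        (fun r : ℝ => (r : ℂ))).charpoly.IsRoot z →
      ‖z‖ ≤ 1 - α * μ / 4) ∧
    1 - α * μ / 4 < 1 := by
  have hL : 0 < L := hμ.trans_le hμL
  have hβ : 0 < 1 - β := sub_pos.mpr hβ1
  refine ⟨fun z hz => ?_, by linarith [mul_pos hα0 hμ]⟩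
  have hw : ∀ i, 0 < ![17 * L / (1 - β), μ / (4 * L), 1] i := by
    intro i
    fin_cases i <;>
      simp only [Fin.zero_eta, Fin.mk_one, Fin.reduceFinMk, Fin.isValue, cons_val_zero,
        cons_val_one, cons_val] <;>
      positivity
  obtain ⟨k, hk⟩ := exists_norm_le_sum_abs_mul_div_of_isRoot_charpoly_map hw hz
  exact hk.trans (dgt_weighted_row_sum_le hμ hμL hβ0 hβ1 hα0 hα k)
end

section
/- Let A be the 3×3 real matrix A = [[(1+β)/2, 5L, 3L], [αβ, β, 0], [0, αL, 1 − αμ/2]]. If 0 < α ≤ (1−β)²μ/(768L²), then I − A is invertible and (I − A)^{-1} is bounded entrywise by (8/((1−β)²αμ)) times the matrix [[αμ(1−β)/2, 6αL², 3L(1−β)], [α²βμ/2, αμ(1−β)/4, 3αβL], [α²βL, αL(1−β)/2, (1−β)²/2]]; that is, every entry of (I − A)^{-1} is at most the corresponding entry of this matrix. -/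
/-!
Writing `I - A = M`, we have `M⁻¹ = (det M)⁻¹ • adj M`. Computed in closed form, the adjugate is the
bound matrix except in two entries, where it is smaller because `μ ≤ L` and `α β L ≥ 0`. The step-size
condition `768 α L² ≤ (1 - β)² μ` absorbs the `α²` terms of `det M` into half of its leading term
`(1 - β)² α μ / 4`, so `det M ≥ (1 - β)² α μ / 8 > 0`.
-/

open Matrix

theorem Matrix.inv_apply_le_inv_mul_of_adjugate_le {n K : Type*} [Fintype n] [DecidableEq n]
    [Field K] [LinearOrder K] [IsStrictOrderedRing K] {M B : Matrix n n K} {a : K}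
    (ha : 0 < a) (hdet : a ≤ M.det) (hadj : ∀ i j, M.adjugate i j ≤ B i j)
    (hB : ∀ i j, 0 ≤ B i j) (i j : n) : M⁻¹ i j ≤ a⁻¹ * B i j := by
  rw [inv_def, Ring.inverse_eq_inv', smul_apply, smul_eq_mul]
  have hdet₀ : 0 < M.det := ha.trans_le hdet
  calc M.det⁻¹ * M.adjugate i j ≤ M.det⁻¹ * B i j := by gcongr; exact hadj i j
    _ ≤ a⁻¹ * B i j := by gcongr; exact hB i j

noncomputable def dgtMatrix (μ L β α : ℝ) : Matrix (Fin 3) (Fin 3) ℝ :=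
  !![(1 + β) / 2, 5 * L, 3 * L;
     α * β, β, 0;
     0, α * L, 1 - α * μ / 2]

noncomputable def dgtInverseBound (μ L β α : ℝ) : Matrix (Fin 3) (Fin 3) ℝ :=
  !![α * μ * (1 - β) / 2, 6 * α * L ^ 2, 3 * L * (1 - β);
     α ^ 2 * β * μ / 2, α * μ * (1 - β) / 4, 3 * α * β * L;
     α ^ 2 * β * L, α * L * (1 - β) / 2, (1 - β) ^ 2 / 2]

section
variable (μ L β α : ℝ)

theorem one_sub_dgtMatrix :
    1 - dgtMatrix μ L β α =
      !![(1 - β) / 2, -(5 * L), -(3 * L);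
         -(α * β), 1 - β, 0;
         0, -(α * L), α * μ / 2] := by
  ext i j
  fin_cases i <;> fin_cases j <;> simp [dgtMatrix, one_apply]; ring

theorem det_one_sub_dgtMatrix :
    (1 - dgtMatrix μ L β α).det =
      (1 - β) ^ 2 * α * μ / 4 - 5 / 2 * α ^ 2 * β * μ * L - 3 * α ^ 2 * β * L ^ 2 := by
  rw [one_sub_dgtMatrix, det_fin_three]
  simp only [of_apply, cons_val', cons_val_zero, cons_val_fin_one, cons_val_one, cons_val]
  ring

theorem adjugate_one_sub_dgtMatrix :
    (1 - dgtMatrix μ L β α).adjugate =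
      !![α * μ * (1 - β) / 2, α * L * (5 / 2 * μ + 3 * L), 3 * L * (1 - β);
         α ^ 2 * β * μ / 2, α * μ * (1 - β) / 4, 3 * α * β * L;
         α ^ 2 * β * L, α * L * (1 - β) / 2, (1 - β) ^ 2 / 2 - 5 * α * β * L] := by
  rw [one_sub_dgtMatrix, adjugate_fin_three_of]
  ext i j
  fin_cases i <;> fin_cases j <;> simp <;> ring

variable {μ L β α}

theorem adjugate_one_sub_dgtMatrix_le (hμ : 0 ≤ μ) (hμL : μ ≤ L) (hβ : 0 ≤ β) (hα : 0 ≤ α)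
    (i j : Fin 3) : (1 - dgtMatrix μ L β α).adjugate i j ≤ dgtInverseBound μ L β α i j := by
  have hL : 0 ≤ L := hμ.trans hμL
  rw [adjugate_one_sub_dgtMatrix]
  fin_cases i <;> fin_cases j <;> simp [dgtInverseBound]
  · nlinarith [mul_le_mul_of_nonneg_left hμL (mul_nonneg hα hL)]
  · positivity

theorem dgtInverseBound_nonneg (hμ : 0 ≤ μ) (hL : 0 ≤ L) (hβ0 : 0 ≤ β) (hβ1 : β ≤ 1)
    (hα : 0 ≤ α) (i j : Fin 3) : 0 ≤ dgtInverseBound μ L β α i j := by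
  have : 0 ≤ 1 - β := sub_nonneg.2 hβ1
  fin_cases i <;> fin_cases j <;> simp [dgtInverseBound] <;> positivity

theorem det_one_sub_dgtMatrix_ge (hμ : 0 < μ) (hμL : μ ≤ L) (hβ : β ≤ 1) (hα0 : 0 < α)
    (hα : α ≤ (1 - β) ^ 2 * μ / (768 * L ^ 2)) :
    (1 - β) ^ 2 * α * μ / 8 ≤ (1 - dgtMatrix μ L β α).det := by
  have hL : 0 < L := hμ.trans_le hμL
  have hαL : α * (768 * L ^ 2) ≤ (1 - β) ^ 2 * μ := (le_div_iff₀ (by positivity)).1 hα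
  have hβμL : β * μ * L ≤ L ^ 2 := by nlinarith [mul_pos hμ hL]
  have hβL : β * L ^ 2 ≤ L ^ 2 := by nlinarith [sq_nonneg L]
  rw [det_one_sub_dgtMatrix]
  nlinarith [mul_le_mul_of_nonneg_left hβμL (sq_nonneg α),
    mul_le_mul_of_nonneg_left hβL (sq_nonneg α), mul_le_mul_of_nonneg_left hαL hα0.le]

end

theorem dgt_matrix_inverse_bound
    (μ L β α : ℝ) (hμ : 0 < μ) (hμL : μ ≤ L) (hβ0 : 0 < β) (hβ1 : β < 1)
    (hα0 : 0 < α) (hα : α ≤ (1 - β) ^ 2 * μ / (768 * L ^ 2)) :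
    IsUnit (1 - (!![(1 + β) / 2, 5 * L, 3 * L;
                    α * β, β, 0;
                    0, α * L, 1 - α * μ / 2] : Matrix (Fin 3) (Fin 3) ℝ)).det ∧
    ∀ i j, (1 - (!![(1 + β) / 2, 5 * L, 3 * L;
                    α * β, β, 0;
                    0, α * L, 1 - α * μ / 2] : Matrix (Fin 3) (Fin 3) ℝ))⁻¹ i j ≤
      (8 / ((1 - β) ^ 2 * α * μ)) *
      (!![α * μ * (1 - β) / 2, 6 * α * L ^ 2, 3 * L * (1 - β);
          α ^ 2 * β * μ / 2, α * μ * (1 - β) / 4, 3 * α * β * L;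
          α ^ 2 * β * L, α * L * (1 - β) / 2, (1 - β) ^ 2 / 2] : Matrix (Fin 3) (Fin 3) ℝ) i j := by
  have hc : 0 < (1 - β) ^ 2 * α * μ / 8 := by
    have : 0 < 1 - β := sub_pos.2 hβ1
    positivity
  have hdet := det_one_sub_dgtMatrix_ge hμ hμL hβ1.le hα0 hα
  refine ⟨(hc.trans_le hdet).ne'.isUnit, fun i j => ?_⟩
  have hentry := inv_apply_le_inv_mul_of_adjugate_le hc hdet
    (adjugate_one_sub_dgtMatrix_le hμ.le hμL hβ0.le hα0.le)
    (dgtInverseBound_nonneg hμ.le (hμ.le.trans hμL) hβ0.le hβ1.le hα0.le) i j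
  rwa [inv_div] at hentry
end

section
/- For the DGT iterates: if the step-size satisfies 0 < α ≤ (1−β)²μ/(768L²), then limsup_{k→∞} (1/√n)·(Σ_{i=1}^n ‖x_i^k − x̃^{k*}‖²)^{1/2} ≤ (4/(αμ) + 40βL/((1−β)²μ))·Δ_x + 16αβL·Δ_g/((1−β)²μ). -/
/-!
Let `p k`, `q k` be the root-mean-square consensus errors of `x k` and `y k`, and
`r k = ‖x̄ k - x* k‖` the error of the network average. Double stochasticity of `W` makes the
average follow an inexact gradient step in which `ȳ k` is the mean of the local gradients, so
`r (k+1) ≤ (1 - αμ/2) r k + αL p k + Δx`; the spectral gap `β` gives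
`p (k+1) ≤ β (p k + α q k)` and `q (k+1) ≤ β q k + L (s (k+1) + s k) + Δg`, where
`s k ≤ p k + r k` is the tracking error to be bounded. A Lyapunov combination of `p`, `q`, `r`
keeps the three errors bounded, so their upper limits are finite and satisfy the same linear
inequalities without the index shift; under the step-size condition this 3 × 3 system is solved
for `limsup p + limsup r`.
-/

open Finset Filter

namespace DGT

open scoped RealInnerProductSpace

section Averaging

variable {ι E : Type*} [Fintype ι] [NormedAddCommGroup E]

noncomputable def rmsNorm (v : ι → E) : ℝ :=
  (√(Fintype.card ι : ℝ))⁻¹ * √(∑ i, ‖v i‖ ^ 2)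

lemma rmsNorm_nonneg (v : ι → E) : 0 ≤ rmsNorm v := by
  unfold rmsNorm; positivity

lemma rmsNorm_eq_norm_toLp (v : ι → E) :
    rmsNorm v = (√(Fintype.card ι : ℝ))⁻¹ * ‖WithLp.toLp 2 v‖ := by
  rw [PiLp.norm_eq_of_L2]; rfl

lemma sq_rmsNorm (v : ι → E) : rmsNorm v ^ 2 = (Fintype.card ι : ℝ)⁻¹ * ∑ i, ‖v i‖ ^ 2 := by
  rw [rmsNorm, mul_pow, inv_pow, Real.sq_sqrt (Nat.cast_nonneg _), Real.sq_sqrt (by positivity)]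

lemma rmsNorm_add_le (v w : ι → E) : rmsNorm (v + w) ≤ rmsNorm v + rmsNorm w := by
  simp only [rmsNorm_eq_norm_toLp, WithLp.toLp_add, ← mul_add]
  gcongr
  exact norm_add_le _ _

lemma rmsNorm_sub_le (v w : ι → E) : rmsNorm (v - w) ≤ rmsNorm v + rmsNorm w := by
  simp only [rmsNorm_eq_norm_toLp, WithLp.toLp_sub, ← mul_add]
  gcongr
  exact norm_sub_le _ _

lemma rmsNorm_const [Nonempty ι] (c : E) : rmsNorm (fun _ : ι => c) = ‖c‖ := by
  have hn : (0 : ℝ) < Fintype.card ι := by exact_mod_cast Fintype.card_pos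
  rw [rmsNorm, sum_const, card_univ, nsmul_eq_mul, Real.sqrt_mul hn.le,
    Real.sqrt_sq (norm_nonneg c), inv_mul_cancel_left₀ (Real.sqrt_pos.2 hn).ne']

lemma rmsNorm_le_inv_sqrt_card_mul_sum (v : ι → E) :
    rmsNorm v ≤ (√(Fintype.card ι : ℝ))⁻¹ * ∑ i, ‖v i‖ := by
  rw [rmsNorm]
  gcongr
  exact Real.sqrt_le_iff.2 ⟨by positivity, sum_sq_le_sq_sum_of_nonneg fun i _ => norm_nonneg _⟩

variable [NormedSpace ℝ E]

noncomputable def mean : (ι → E) →ₗ[ℝ] E :=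
  (Fintype.card ι : ℝ)⁻¹ • ∑ i, LinearMap.proj i

lemma mean_apply (v : ι → E) : mean v = (Fintype.card ι : ℝ)⁻¹ • ∑ i, v i := by
  simp [mean]

noncomputable def deviation : (ι → E) →ₗ[ℝ] ι → E :=
  LinearMap.id - LinearMap.pi fun _ => mean

lemma deviation_apply (v : ι → E) (i : ι) : deviation v i = v i - mean v := rfl

noncomputable def mix (W : ι → ι → ℝ) : (ι → E) →ₗ[ℝ] ι → E :=
  LinearMap.pi fun i => ∑ j, W i j • LinearMap.proj j

lemma mix_apply (W : ι → ι → ℝ) (v : ι → E) (i : ι) : mix W v i = ∑ j, W i j • v j := by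
  simp [mix]

lemma rmsNorm_smul (c : ℝ) (v : ι → E) : rmsNorm (c • v) = |c| * rmsNorm v := by
  simp only [rmsNorm_eq_norm_toLp, WithLp.toLp_smul, norm_smul, Real.norm_eq_abs]
  ring

lemma rmsNorm_le_of_norm_le {c : ℝ} (hc : 0 ≤ c) {v w : ι → E} (h : ∀ i, ‖v i‖ ≤ c * ‖w i‖) :
    rmsNorm v ≤ c * rmsNorm w := by
  rw [← abs_of_nonneg hc, ← rmsNorm_smul, rmsNorm, rmsNorm]
  gcongr with i
  simpa [norm_smul, abs_of_nonneg hc] using h i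

lemma rmsNorm_map_sub_map_le {G G' : ι → E → E} {L : ℝ} (hL : 0 ≤ L)
    (hG : ∀ i a b, ‖G i a - G i b‖ ≤ L * ‖a - b‖) (hG' : ∀ i a b, ‖G' i a - G' i b‖ ≤ L * ‖a - b‖)
    (v v' : ι → E) (z z' : E) :
    rmsNorm (fun i => G' i (v' i) - G i (v i)) ≤
      L * rmsNorm (v' - fun _ => z') + rmsNorm (fun i => G' i z' - G i z) +
        L * rmsNorm (v - fun _ => z) := by
  have hsplit : (fun i => G' i (v' i) - G i (v i)) = (fun i => G' i (v' i) - G' i z') +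
      (fun i => G' i z' - G i z) + fun i => G i z - G i (v i) := by
    ext1 i; simp
  rw [hsplit]
  refine (rmsNorm_add_le _ _).trans (add_le_add ((rmsNorm_add_le _ _).trans
    (add_le_add (rmsNorm_le_of_norm_le hL fun i => hG' i (v' i) z') le_rfl))
    (rmsNorm_le_of_norm_le hL fun i => ?_))
  rw [Pi.sub_apply, norm_sub_rev (v i)]
  exact hG i z (v i)


variable {W : ι → ι → ℝ}

lemma mean_mix (hcol : ∀ j, ∑ i, W i j = 1) (v : ι → E) : mean (mix W v) = mean v := by
  simp only [mean_apply, mix_apply]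
  rw [sum_comm]
  simp only [← sum_smul, hcol, one_smul]

lemma deviation_mix (hrow : ∀ i, ∑ j, W i j = 1) (hcol : ∀ j, ∑ i, W i j = 1) (v : ι → E) :
    deviation (mix W v) = mix W (deviation v) := by
  ext1 i
  simp only [deviation_apply, mix_apply, mean_mix hcol, smul_sub, sum_sub_distrib, ← sum_smul,
    hrow, one_smul]

variable [Nonempty ι]

lemma sum_eq_card_smul_mean (v : ι → E) : ∑ i, v i = (Fintype.card ι : ℝ) • mean v := by
  rw [mean_apply, smul_smul, mul_inv_cancel₀ (by exact_mod_cast Fintype.card_ne_zero), one_smul]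

lemma sum_deviation (v : ι → E) : ∑ i, deviation v i = 0 := by
  simp only [deviation_apply, sum_sub_distrib, sum_const, card_univ, sum_eq_card_smul_mean,
    Nat.cast_smul_eq_nsmul, sub_self]

lemma rmsNorm_sub_const_le (v : ι → E) (z : E) :
    rmsNorm (v - fun _ => z) ≤ rmsNorm (deviation v) + ‖mean v - z‖ := by
  have hsplit : v - (fun _ => z) = deviation v + fun _ => mean v - z := by
    ext1 i; simp [deviation_apply]
  rw [hsplit, ← rmsNorm_const (ι := ι) (mean v - z)]
  exact rmsNorm_add_le _ _

variable {β : ℝ}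

lemma rmsNorm_deviation_mix_le (hrow : ∀ i, ∑ j, W i j = 1) (hcol : ∀ j, ∑ i, W i j = 1)
    (hβ : ∀ v : ι → E, ∑ i, v i = 0 → rmsNorm (mix W v) ≤ β * rmsNorm v) (v : ι → E) :
    rmsNorm (deviation (mix W v)) ≤ β * rmsNorm (deviation v) := by
  rw [deviation_mix hrow hcol]
  exact hβ _ (sum_deviation v)

lemma rmsNorm_deviation_mix_sub_smul_le (hrow : ∀ i, ∑ j, W i j = 1)
    (hcol : ∀ j, ∑ i, W i j = 1) (hβ0 : 0 ≤ β)
    (hβ : ∀ v : ι → E, ∑ i, v i = 0 → rmsNorm (mix W v) ≤ β * rmsNorm v) {α : ℝ} (hα : 0 ≤ α)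
    (v w : ι → E) :
    rmsNorm (deviation (mix W (v - α • w))) ≤
      β * (rmsNorm (deviation v) + α * rmsNorm (deviation w)) := by
  refine (rmsNorm_deviation_mix_le hrow hcol hβ _).trans (mul_le_mul_of_nonneg_left ?_ hβ0)
  rw [map_sub, map_smul]
  refine (rmsNorm_sub_le _ _).trans_eq ?_
  rw [rmsNorm_smul, abs_of_nonneg hα]

end Averaging

section GradientStep

variable {E : Type*} [NormedAddCommGroup E] [InnerProductSpace ℝ E]

lemma norm_sub_smul_le_of_inner_ge {u v : E} {α μ L : ℝ} (hα : 0 ≤ α)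
    (hαL : α * L ^ 2 ≤ μ) (hinner : μ * ‖u‖ ^ 2 ≤ ⟪v, u⟫) (hnorm : ‖v‖ ≤ L * ‖u‖) :
    ‖u - α • v‖ ≤ (1 - α * μ / 2) * ‖u‖ := by
  have hsq : ‖u - α • v‖ ^ 2 ≤ (1 - α * μ) * ‖u‖ ^ 2 := by
    have hv : ‖v‖ ^ 2 ≤ L ^ 2 * ‖u‖ ^ 2 := by
      rw [← mul_pow]; exact pow_le_pow_left₀ (norm_nonneg v) hnorm 2
    rw [norm_sub_sq_real, real_inner_smul_right, norm_smul, Real.norm_eq_abs, abs_of_nonneg hα,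
      real_inner_comm]
    nlinarith [mul_le_mul_of_nonneg_left hv (sq_nonneg α), mul_nonneg hα (sq_nonneg ‖u‖)]
  have hrate : 0 ≤ (1 - α * μ / 2) * ‖u‖ := by
    rcases (norm_nonneg u).eq_or_lt with hu | hu
    · rw [← hu, mul_zero]
    · nlinarith [sq_nonneg ‖u - α • v‖, mul_pos hu hu]
  rw [← pow_le_pow_iff_left₀ (norm_nonneg _) hrate two_ne_zero]
  nlinarith [sq_nonneg (α * μ * ‖u‖)]

end GradientStep

section OneStepBounds

variable {ι E : Type*} [Fintype ι] [NormedAddCommGroup E] [InnerProductSpace ℝ E] [Nonempty ι]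

lemma sq_rmsNorm_eq_sq_rmsNorm_deviation_add (v : ι → E) :
    rmsNorm v ^ 2 = rmsNorm (deviation v) ^ 2 + ‖mean v‖ ^ 2 := by
  have hn : (Fintype.card ι : ℝ) ≠ 0 := by exact_mod_cast Fintype.card_ne_zero
  have hdev : ∑ i, ‖deviation v i‖ ^ 2 = ∑ i, ‖v i‖ ^ 2 - Fintype.card ι * ‖mean v‖ ^ 2 := by
    simp only [deviation_apply, norm_sub_sq_real, sum_add_distrib, sum_sub_distrib, ← mul_sum,
      ← sum_inner, sum_eq_card_smul_mean v, real_inner_smul_left, real_inner_self_eq_norm_sq,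
      sum_const, card_univ, nsmul_eq_mul]
    ring
  rw [sq_rmsNorm, sq_rmsNorm, hdev]
  field_simp
  ring

lemma norm_mean_le_rmsNorm (v : ι → E) : ‖mean v‖ ≤ rmsNorm v := by
  rw [← pow_le_pow_iff_left₀ (norm_nonneg _) (rmsNorm_nonneg v) two_ne_zero,
    sq_rmsNorm_eq_sq_rmsNorm_deviation_add v]
  nlinarith [sq_nonneg (rmsNorm (deviation v))]

lemma rmsNorm_deviation_le (v : ι → E) : rmsNorm (deviation v) ≤ rmsNorm v := by
  rw [← pow_le_pow_iff_left₀ (rmsNorm_nonneg _) (rmsNorm_nonneg v) two_ne_zero,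
    sq_rmsNorm_eq_sq_rmsNorm_deviation_add v]
  nlinarith [sq_nonneg ‖mean v‖]

lemma le_inner_mean {d : ι → E} {u : E} {c : ℝ} (h : ∀ i, c ≤ ⟪d i, u⟫) : c ≤ ⟪mean d, u⟫ := by
  have hn : (0 : ℝ) < Fintype.card ι := by exact_mod_cast Fintype.card_pos
  rw [mean_apply, real_inner_smul_left, sum_inner, le_inv_mul_iff₀ hn]
  simpa using sum_le_sum fun i (_ : i ∈ univ) => h i

variable {W : ι → ι → ℝ} {α β μ L : ℝ}

lemma rmsNorm_deviation_mix_add_le (hrow : ∀ i, ∑ j, W i j = 1) (hcol : ∀ j, ∑ i, W i j = 1)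
    (hβ : ∀ v : ι → E, ∑ i, v i = 0 → rmsNorm (mix W v) ≤ β * rmsNorm v) (w d : ι → E) :
    rmsNorm (deviation (mix W w + d)) ≤ β * rmsNorm (deviation w) + rmsNorm d := by
  rw [map_add]
  exact (rmsNorm_add_le _ _).trans
    (add_le_add (rmsNorm_deviation_mix_le hrow hcol hβ w) (rmsNorm_deviation_le d))

/-- A gradient step for the averaged map `fun a => mean fun i => G i a`, which vanishes at `z`,
taken with the map evaluated at the points `v i` instead of at `mean v`. -/
lemma norm_mean_sub_smul_mean_sub_le {G : ι → E → E} (hα : 0 ≤ α) (hL : 0 ≤ L)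
    (hαL : α * L ^ 2 ≤ μ) (hsc : ∀ i a b, ⟪G i a - G i b, a - b⟫ ≥ μ * ‖a - b‖ ^ 2)
    (hsm : ∀ i a b, ‖G i a - G i b‖ ≤ L * ‖a - b‖) {z : E} (hz : ∑ i, G i z = 0)
    (v : ι → E) (z' : E) :
    ‖mean v - α • mean (fun i => G i (v i)) - z'‖ ≤
      (1 - α * μ / 2) * ‖mean v - z‖ + α * L * rmsNorm (deviation v) + ‖z' - z‖ := by
  set m := mean v
  have hsplit : m - α • mean (fun i => G i (v i)) - z' =
      (m - z - α • mean (fun i => G i m - G i z)) - α • mean (fun i => G i (v i) - G i m) +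
        (z - z') := by
    simp only [mean_apply, sum_sub_distrib, hz, smul_sub, sub_zero]
    abel
  have hstep : ‖m - z - α • mean (fun i => G i m - G i z)‖ ≤ (1 - α * μ / 2) * ‖m - z‖ := by
    refine norm_sub_smul_le_of_inner_ge hα hαL (le_inner_mean fun i => hsc i m z) ?_
    refine (norm_mean_le_rmsNorm _).trans ?_
    rw [← rmsNorm_const (ι := ι) (m - z)]
    exact rmsNorm_le_of_norm_le hL fun i => hsm i m z
  have hgrad : ‖α • mean (fun i => G i (v i) - G i m)‖ ≤ α * L * rmsNorm (deviation v) := by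
    rw [norm_smul, Real.norm_eq_abs, abs_of_nonneg hα, mul_assoc]
    refine mul_le_mul_of_nonneg_left ((norm_mean_le_rmsNorm _).trans ?_) hα
    exact rmsNorm_le_of_norm_le hL fun i => hsm i (v i) m
  rw [hsplit, norm_sub_rev z']
  exact (norm_add_le _ _).trans (add_le_add ((norm_sub_le _ _).trans
    (add_le_add hstep hgrad)) le_rfl)

end OneStepBounds

section Recursions

lemma le_max_of_le_mul_add {V : ℕ → ℝ} {ρ C : ℝ} (hρ0 : 0 ≤ ρ) (hρ1 : ρ < 1)
    (h : ∀ k, V (k + 1) ≤ ρ * V k + C) (k : ℕ) : V k ≤ max (V 0) (C / (1 - ρ)) := by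
  induction k with
  | zero => exact le_max_left _ _
  | succ k ih =>
    have hC : C ≤ (1 - ρ) * max (V 0) (C / (1 - ρ)) := by
      rw [← div_le_iff₀' (by linarith)]; exact le_max_right _ _
    nlinarith [h k, mul_le_mul_of_nonneg_left ih hρ0]

lemma limsup_le_mul_add_mul_add {α : Type*} {f : Filter α} {u v w : α → ℝ} {a b c : ℝ}
    (ha : 0 ≤ a) (hb : 0 ≤ b) (hu : IsCoboundedUnder (· ≤ ·) f u)
    (hv : IsBoundedUnder (· ≤ ·) f v) (hw : IsBoundedUnder (· ≤ ·) f w)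
    (h : ∀ᶠ k in f, u k ≤ a * v k + b * w k + c) :
    limsup u f ≤ a * limsup v f + b * limsup w f + c := by
  refine le_of_forall_pos_le_add fun ε hε => ?_
  have hδ : 0 < ε / (a + b + 1) := by positivity
  have hε' : (a + b + 1) * (ε / (a + b + 1)) = ε := mul_div_cancel₀ _ (by positivity)
  refine limsup_le_of_le hu ?_
  filter_upwards [h, eventually_lt_of_limsup_lt (lt_add_of_pos_right _ hδ) hv,
    eventually_lt_of_limsup_lt (lt_add_of_pos_right _ hδ) hw] with k hk hvk hwk
  nlinarith [mul_le_mul_of_nonneg_left hvk.le ha, mul_le_mul_of_nonneg_left hwk.le hb]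

variable {p q r s : ℕ → ℝ} {α β μ L E₁ E₂ : ℝ}

/-- A Lyapunov function `12 L (1 - β) r + 48 α L² p + α μ (1 - β) q`, contracting at rate
`1 - α μ / 4`, keeps the three error sequences bounded. -/
lemma bddAbove_of_recursions (hμ : 0 < μ) (hμL : μ ≤ L) (hβ0 : 0 ≤ β) (hβ1 : β < 1)
    (hα0 : 0 < α) (hα : 768 * α * L ^ 2 ≤ (1 - β) ^ 2 * μ)
    (hp0 : ∀ k, 0 ≤ p k) (hq0 : ∀ k, 0 ≤ q k) (hr0 : ∀ k, 0 ≤ r k)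
    (hp : ∀ k, p (k + 1) ≤ β * (p k + α * q k))
    (hr : ∀ k, r (k + 1) ≤ (1 - α * μ / 2) * r k + α * L * p k + E₁)
    (hq : ∀ k, q (k + 1) ≤ (β + α * L) * q k + 3 * L * (p k + r k) + (L * E₁ + E₂)) :
    BddAbove (Set.range p) ∧ BddAbove (Set.range q) ∧ BddAbove (Set.range r) := by
  have hγ0 : 0 < 1 - β := by linarith
  have hL : 0 < L := hμ.trans_le hμL
  have hαL : 768 * α * L ≤ 1 - β := by
    nlinarith [mul_le_mul_of_nonneg_left hμL (sq_nonneg (1 - β)),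
      mul_le_mul_of_nonneg_left hβ0 hγ0.le]
  have hαμ : α * μ ≤ 1 - β := by nlinarith [mul_le_mul_of_nonneg_left hμL hα0.le]
  set V := fun k => 12 * L * (1 - β) * r k + 48 * α * L ^ 2 * p k + α * μ * (1 - β) * q k
  have hcoef_p : 12 * L * (1 - β) * (α * L) + 48 * α * L ^ 2 * β + α * μ * (1 - β) * (3 * L) ≤
      (1 - α * μ / 4) * (48 * α * L ^ 2) := by
    nlinarith [mul_le_mul_of_nonneg_left hμL (by positivity : 0 ≤ α * (1 - β) * L),
      mul_le_mul_of_nonneg_left hαμ (by positivity : 0 ≤ α * L ^ 2)]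
  have hcoef_q : 48 * α * L ^ 2 * (α * β) + α * μ * (1 - β) * (β + α * L) ≤
      (1 - α * μ / 4) * (α * μ * (1 - β)) := by
    have h1 : 48 * α * L ^ 2 * β ≤ (1 - β) ^ 2 * μ / 16 := by
      nlinarith [mul_le_mul_of_nonneg_left hβ1.le (by positivity : 0 ≤ 48 * α * L ^ 2)]
    have h2 : μ * (1 - β) * (α * L) ≤ μ * (1 - β) ^ 2 / 768 := by
      nlinarith [mul_le_mul_of_nonneg_left hαL (by positivity : 0 ≤ μ * (1 - β))]
    have h3 : μ * (1 - β) * (α * μ) ≤ μ * (1 - β) ^ 2 := by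
      nlinarith [mul_le_mul_of_nonneg_left hαμ (by positivity : 0 ≤ μ * (1 - β))]
    nlinarith [mul_le_mul_of_nonneg_left h1 hα0.le, mul_le_mul_of_nonneg_left h2 hα0.le,
      mul_le_mul_of_nonneg_left h3 hα0.le]
  set C := 12 * L * (1 - β) * E₁ + α * μ * (1 - β) * (L * E₁ + E₂)
  have hV : ∀ k, V (k + 1) ≤ (1 - α * μ / 4) * V k + C := by
    intro k
    simp only [V, C]
    nlinarith [mul_le_mul_of_nonneg_left (hr k) (by positivity : 0 ≤ 12 * L * (1 - β)),
      mul_le_mul_of_nonneg_left (hp k) (by positivity : 0 ≤ 48 * α * L ^ 2),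
      mul_le_mul_of_nonneg_left (hq k) (by positivity : 0 ≤ α * μ * (1 - β)),
      mul_le_mul_of_nonneg_right hcoef_p (hp0 k), mul_le_mul_of_nonneg_right hcoef_q (hq0 k)]
  have hVB := le_max_of_le_mul_add (by nlinarith) (by nlinarith) hV
  set B := max (V 0) (C / (1 - (1 - α * μ / 4)))
  have hw_r : 0 < 12 * L * (1 - β) := by positivity
  have hw_p : 0 < 48 * α * L ^ 2 := by positivity
  have hw_q : 0 < α * μ * (1 - β) := by positivity
  refine ⟨⟨B / (48 * α * L ^ 2), ?_⟩, ⟨B / (α * μ * (1 - β)), ?_⟩, ⟨B / (12 * L * (1 - β)), ?_⟩⟩ <;>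
    rintro _ ⟨k, rfl⟩ <;> rw [le_div_iff₀' (by positivity)] <;>
    nlinarith [hVB k, mul_nonneg hw_r.le (hr0 k), mul_nonneg hw_p.le (hp0 k),
      mul_nonneg hw_q.le (hq0 k)]

lemma add_le_of_fixed_point_ineqs {P Q R : ℝ} (hμ : 0 < μ) (hμL : μ ≤ L) (hβ0 : 0 ≤ β)
    (hβ1 : β < 1) (hα0 : 0 < α) (hα : 768 * α * L ^ 2 ≤ (1 - β) ^ 2 * μ) (hE₁ : 0 ≤ E₁)
    (hE₂ : 0 ≤ E₂) (hP0 : 0 ≤ P) (hQ0 : 0 ≤ Q)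
    (hP : P ≤ β * (P + α * Q)) (hR : R ≤ (1 - α * μ / 2) * R + α * L * P + E₁)
    (hQ : Q ≤ (β + α * L) * Q + 3 * L * (P + R) + (L * E₁ + E₂)) :
    P + R ≤ (4 / (α * μ) + 40 * β * L / ((1 - β) ^ 2 * μ)) * E₁ +
      16 * α * β * L * E₂ / ((1 - β) ^ 2 * μ) := by
  have hγ0 : 0 < 1 - β := by linarith
  have hL : 0 < L := hμ.trans_le hμL
  have hαL : 768 * α * L ≤ (1 - β) ^ 2 := by
    nlinarith [mul_le_mul_of_nonneg_left hμL (sq_nonneg (1 - β))]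
  have hPQ : (1 - β) * P ≤ α * β * Q := by linarith
  have hQ' : (1 - β) * Q ≤ 6 * L * (P + R) + 2 * (L * E₁ + E₂) := by
    nlinarith [mul_le_mul_of_nonneg_left hαL hQ0, mul_le_mul_of_nonneg_left hβ0 hQ0]
  have hPR : α * μ * (P + R) ≤ 3 * α * L * P + 2 * E₁ := by
    nlinarith [mul_le_mul_of_nonneg_left hμL (mul_nonneg hα0.le hP0)]
  have hP' :
      (1 - β) ^ 2 * μ * P ≤ 24 * β * L * E₁ + 4 * α * β * L * μ * E₁ + 4 * α * β * μ * E₂ := by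
    have h1 : (1 - β) ^ 2 * P ≤ α * β * (6 * L * (P + R) + 2 * (L * E₁ + E₂)) := by
      nlinarith [mul_le_mul_of_nonneg_left hQ' (by positivity : 0 ≤ α * β)]
    have h2 : 18 * α * β * L ^ 2 * P ≤ (1 - β) ^ 2 * μ / 2 * P := by
      nlinarith [mul_le_mul_of_nonneg_left hβ1.le (by positivity : 0 ≤ α * L ^ 2 * P),
        mul_le_mul_of_nonneg_right hα hP0]
    nlinarith [mul_le_mul_of_nonneg_left h1 hμ.le,
      mul_le_mul_of_nonneg_left hPR (by positivity : 0 ≤ 6 * β * L)]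
  have hfinal : α * (1 - β) ^ 2 * μ ^ 2 * (P + R) ≤
      4 * (1 - β) ^ 2 * μ * E₁ + 40 * α * β * L * μ * E₁ + 16 * α ^ 2 * β * L * μ * E₂ := by
    have h1 : 36 * α * β * L ^ 2 * E₁ ≤ (1 - β) ^ 2 * μ * E₁ := by
      nlinarith [mul_le_mul_of_nonneg_left hβ1.le (by positivity : 0 ≤ α * L ^ 2 * E₁),
        mul_le_mul_of_nonneg_right hα hE₁]
    have h2 : 12 * α * L * (α * β * L * μ * E₁) ≤ 40 * (α * β * L * μ * E₁) := by
      have : (1 - β) ^ 2 ≤ 1 := pow_le_one₀ hγ0.le (by linarith)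
      exact mul_le_mul_of_nonneg_right (by linarith) (by positivity)
    nlinarith [mul_le_mul_of_nonneg_left hPR (by positivity : 0 ≤ (1 - β) ^ 2 * μ),
      mul_le_mul_of_nonneg_left hP' (by positivity : 0 ≤ 3 * α * L),
      (by positivity : 0 ≤ α ^ 2 * β * L * μ * E₂)]
  rw [← le_div_iff₀' (by positivity)] at hfinal
  refine hfinal.trans_eq ?_
  field_simp

lemma tracking_recursion_closed (hμ : 0 < μ) (hμL : μ ≤ L) (hβ1 : β < 1) (hα0 : 0 < α)
    (hαL : α * L ≤ 1) (hp0 : ∀ k, 0 ≤ p k) (hq0 : ∀ k, 0 ≤ q k) (hr0 : ∀ k, 0 ≤ r k)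
    (hs : ∀ k, s k ≤ p k + r k)
    (hp : ∀ k, p (k + 1) ≤ β * (p k + α * q k))
    (hr : ∀ k, r (k + 1) ≤ (1 - α * μ / 2) * r k + α * L * p k + E₁)
    (hq : ∀ k, q (k + 1) ≤ β * q k + L * s (k + 1) + L * s k + E₂) (k : ℕ) :
    q (k + 1) ≤ (β + α * L) * q k + 3 * L * (p k + r k) + (L * E₁ + E₂) := by
  have hL : 0 < L := hμ.trans_le hμL
  nlinarith [hq k, mul_le_mul_of_nonneg_left (hs k) hL.le,
    mul_le_mul_of_nonneg_left ((hs (k + 1)).trans (add_le_add (hp k) (hr k))) hL.le,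
    mul_le_mul_of_nonneg_right hβ1.le (mul_nonneg (by positivity) (hq0 k) : 0 ≤ α * L * q k),
    mul_le_mul_of_nonneg_right hβ1.le (mul_nonneg hL.le (hp0 k)),
    mul_le_mul_of_nonneg_right hαL (mul_nonneg hL.le (hp0 k)),
    mul_nonneg (by positivity : 0 ≤ α * μ * L) (hr0 k), mul_nonneg hL.le (hr0 k)]

theorem limsup_le_of_recursions (hμ : 0 < μ) (hμL : μ ≤ L) (hβ0 : 0 ≤ β) (hβ1 : β < 1)
    (hα0 : 0 < α) (hα : α ≤ (1 - β) ^ 2 * μ / (768 * L ^ 2)) (hE₁ : 0 ≤ E₁) (hE₂ : 0 ≤ E₂)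
    (hp0 : ∀ k, 0 ≤ p k) (hq0 : ∀ k, 0 ≤ q k) (hr0 : ∀ k, 0 ≤ r k) (hs0 : ∀ k, 0 ≤ s k)
    (hs : ∀ k, s k ≤ p k + r k)
    (hp : ∀ k, p (k + 1) ≤ β * (p k + α * q k))
    (hr : ∀ k, r (k + 1) ≤ (1 - α * μ / 2) * r k + α * L * p k + E₁)
    (hq : ∀ k, q (k + 1) ≤ β * q k + L * s (k + 1) + L * s k + E₂) :
    limsup s atTop ≤ (4 / (α * μ) + 40 * β * L / ((1 - β) ^ 2 * μ)) * E₁ +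
      16 * α * β * L * E₂ / ((1 - β) ^ 2 * μ) := by
  have hL : 0 < L := hμ.trans_le hμL
  have hα' : 768 * α * L ^ 2 ≤ (1 - β) ^ 2 * μ := by
    rw [le_div_iff₀ (by positivity)] at hα; linarith
  have hαL : α * L ≤ 1 := by
    have : (1 - β) ^ 2 ≤ 1 := pow_le_one₀ (by linarith) (by linarith)
    nlinarith [mul_le_mul_of_nonneg_right this hμ.le]
  have hq' := tracking_recursion_closed hμ hμL hβ1 hα0 hαL hp0 hq0 hr0 hs hp hr hq
  obtain ⟨hpB, hqB, hrB⟩ := bddAbove_of_recursions hμ hμL hβ0 hβ1 hα0 hα' hp0 hq0 hr0 hp hr hq'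
  replace hpB := hpB.isBoundedUnder_of_range (f := atTop)
  replace hqB := hqB.isBoundedUnder_of_range (f := atTop)
  replace hrB := hrB.isBoundedUnder_of_range (f := atTop)
  have hP := limsup_le_mul_add_mul_add (u := fun k => p (k + 1)) hβ0 (by positivity)
    (isCoboundedUnder_le_of_le atTop fun k => hp0 (k + 1)) hpB hqB
    (Eventually.of_forall fun k => (hp k).trans_eq (by ring : _ = β * p k + α * β * q k + 0))
  have hR := limsup_le_mul_add_mul_add (u := fun k => r (k + 1)) (by nlinarith) (by positivity)
    (isCoboundedUnder_le_of_le atTop fun k => hr0 (k + 1)) hrB hpB (Eventually.of_forall hr)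
  have hpr := limsup_le_mul_add_mul_add (u := p + r) zero_le_one zero_le_one
    (isCoboundedUnder_le_of_le atTop fun k => add_nonneg (hp0 k) (hr0 k)) hpB hrB
    (Eventually.of_forall fun k => (by simp : (p + r) k = 1 * p k + 1 * r k + 0).le)
  have hQ := limsup_le_mul_add_mul_add (u := fun k => q (k + 1)) (by positivity) (by positivity)
    (isCoboundedUnder_le_of_le atTop fun k => hq0 (k + 1)) hqB (isBoundedUnder_le_add hpB hrB)
    (Eventually.of_forall hq')
  have hS := limsup_le_mul_add_mul_add zero_le_one zero_le_one
    (isCoboundedUnder_le_of_le atTop hs0) hpB hrB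
    (Eventually.of_forall fun k => (hs k).trans_eq (by ring : _ = 1 * p k + 1 * r k + 0))
  rw [limsup_nat_add p 1] at hP
  rw [limsup_nat_add r 1] at hR
  rw [limsup_nat_add q 1] at hQ
  refine (hS.trans_eq (by ring)).trans (add_le_of_fixed_point_ineqs hμ hμL hβ0 hβ1 hα0 hα' hE₁ hE₂
    (le_limsup_of_frequently_le (Frequently.of_forall hp0) hpB)
    (le_limsup_of_frequently_le (Frequently.of_forall hq0) hqB) (by linarith) hR ?_)
  nlinarith [mul_le_mul_of_nonneg_left hpr (by positivity : 0 ≤ 3 * L)]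

end Recursions

section Convergence

variable {ι E : Type*} [Fintype ι] [NormedAddCommGroup E] [InnerProductSpace ℝ E]
  {W : ι → ι → ℝ} {g : ℕ → ι → E → E} {xstar : ℕ → E} {x y : ℕ → ι → E}

lemma mean_eq_mean_grad_of_tracking (hcol : ∀ j, ∑ i, W i j = 1)
    (hy0 : y 0 = fun i => g 0 i (x 0 i))
    (hy : ∀ k, y (k + 1) = mix W (y k) + fun i => g (k + 1) i (x (k + 1) i) - g k i (x k i))
    (k : ℕ) : mean (y k) = mean fun i => g k i (x k i) := by
  induction k with
  | zero => rw [hy0]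
  | succ k ih =>
    rw [hy k, map_add, mean_mix hcol, ih, ← map_add]
    congr 1
    ext1 i
    exact add_sub_cancel _ _

theorem limsup_rmsNorm_sub_le [Nonempty ι] {μ L Δx Δg β α : ℝ} (hμ : 0 < μ) (hμL : μ ≤ L)
    (hsc : ∀ k i a b, ⟪g k i a - g k i b, a - b⟫ ≥ μ * ‖a - b‖ ^ 2)
    (hsm : ∀ k i a b, ‖g k i a - g k i b‖ ≤ L * ‖a - b‖)
    (hopt : ∀ k, ∑ i, g k i (xstar k) = 0)
    (hdrift : ∀ k, ‖xstar (k + 1) - xstar k‖ ≤ Δx)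
    (hgdrift : ∀ k, rmsNorm (fun i => g (k + 1) i (xstar (k + 1)) - g k i (xstar k)) ≤ Δg)
    (hrow : ∀ i, ∑ j, W i j = 1) (hcol : ∀ j, ∑ i, W i j = 1) (hβ0 : 0 ≤ β) (hβ1 : β < 1)
    (hβ : ∀ v : ι → E, ∑ i, v i = 0 → rmsNorm (mix W v) ≤ β * rmsNorm v)
    (hα0 : 0 < α) (hα : α ≤ (1 - β) ^ 2 * μ / (768 * L ^ 2))
    (hy0 : y 0 = fun i => g 0 i (x 0 i))
    (hx : ∀ k, x (k + 1) = mix W (x k - α • y k))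
    (hy : ∀ k, y (k + 1) = mix W (y k) + fun i => g (k + 1) i (x (k + 1) i) - g k i (x k i)) :
    limsup (fun k => rmsNorm (x k - fun _ => xstar k)) atTop ≤
      (4 / (α * μ) + 40 * β * L / ((1 - β) ^ 2 * μ)) * Δx +
        16 * α * β * L * Δg / ((1 - β) ^ 2 * μ) := by
  have hL : 0 < L := hμ.trans_le hμL
  have hαL : α * L ^ 2 ≤ μ := by
    rw [le_div_iff₀ (by positivity)] at hα
    nlinarith [(pow_le_one₀ (by linarith) (by linarith) : (1 - β) ^ 2 ≤ 1)]
  refine limsup_le_of_recursions (p := fun k => rmsNorm (deviation (x k)))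
    (q := fun k => rmsNorm (deviation (y k))) (r := fun k => ‖mean (x k) - xstar k‖)
    hμ hμL hβ0 hβ1 hα0 hα ((norm_nonneg _).trans (hdrift 0)) ((rmsNorm_nonneg _).trans (hgdrift 0))
    (fun _ => rmsNorm_nonneg _) (fun _ => rmsNorm_nonneg _) (fun _ => norm_nonneg _)
    (fun _ => rmsNorm_nonneg _) (fun k => rmsNorm_sub_const_le _ _) (fun k => ?_) (fun k => ?_)
    (fun k => ?_)
  · rw [hx k]
    exact rmsNorm_deviation_mix_sub_smul_le hrow hcol hβ0 hβ hα0.le _ _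
  · rw [hx k, mean_mix hcol, map_sub, map_smul, mean_eq_mean_grad_of_tracking hcol hy0 hy k]
    exact (norm_mean_sub_smul_mean_sub_le hα0.le hL.le hαL (hsc k) (hsm k) (hopt k) (x k)
      (xstar (k + 1))).trans (add_le_add le_rfl (hdrift k))
  · rw [hy k]
    refine (rmsNorm_deviation_mix_add_le hrow hcol hβ (y k) _).trans ?_
    linarith [rmsNorm_map_sub_map_le hL.le (hsm k) (hsm (k + 1)) (x k) (x (k + 1)) (xstar k)
      (xstar (k + 1)), hgdrift k]

end Convergence

end DGT

open DGT

theorem dgt_steady_state_tracking_error_general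
    (n d : ℕ) (hn : 1 ≤ n)
    (μ L : ℝ) (hμ : 0 < μ) (hμL : μ ≤ L)
    (g : ℕ → Fin n → EuclideanSpace ℝ (Fin d) → EuclideanSpace ℝ (Fin d))
    (hsc : ∀ k i x y, (inner ℝ (g k i x - g k i y) (x - y) : ℝ) ≥ μ * ‖x - y‖ ^ 2)
    (hsm : ∀ k i x y, ‖g k i x - g k i y‖ ≤ L * ‖x - y‖)
    (xstar : ℕ → EuclideanSpace ℝ (Fin d))
    (hopt : ∀ k, ∑ i, g k i (xstar k) = 0)
    (Δx : ℝ)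
    (hdrift : ∀ k, ‖xstar (k + 1) - xstar k‖ ≤ Δx)
    (Δg : ℝ)
    (hgdrift : ∀ k, (Real.sqrt n)⁻¹ *
      ∑ i, ‖g (k + 1) i (xstar (k + 1)) - g k i (xstar k)‖ ≤ Δg)
    (W : Fin n → Fin n → ℝ)
    (hWrow : ∀ i, ∑ j, W i j = 1)
    (hWcol : ∀ j, ∑ i, W i j = 1)
    (β : ℝ) (hβ0 : 0 ≤ β) (hβ1 : β < 1)
    (hβ : ∀ v : Fin n → EuclideanSpace ℝ (Fin d), (∑ i, v i) = 0 →
      Real.sqrt (∑ i, ‖∑ j, W i j • v j‖ ^ 2) ≤ β * Real.sqrt (∑ i, ‖v i‖ ^ 2))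
    (α : ℝ) (hα0 : 0 < α) (hα : α ≤ (1 - β) ^ 2 * μ / (768 * L ^ 2))
    (x y : ℕ → Fin n → EuclideanSpace ℝ (Fin d))
    (hy0 : ∀ i, y 0 i = g 0 i (x 0 i))
    (hx : ∀ k i, x (k + 1) i = ∑ j, W i j • (x k j - α • y k j))
    (hy : ∀ k i, y (k + 1) i =
      (∑ j, W i j • y k j) + g (k + 1) i (x (k + 1) i) - g k i (x k i)) :
    Filter.limsup
      (fun k => (Real.sqrt n)⁻¹ * Real.sqrt (∑ i, ‖x k i - xstar k‖ ^ 2))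
      Filter.atTop ≤
      (4 / (α * μ) + 40 * β * L / ((1 - β) ^ 2 * μ)) * Δx
      + 16 * α * β * L * Δg / ((1 - β) ^ 2 * μ) := by
  have : Nonempty (Fin n) := ⟨⟨0, hn⟩⟩
  have hrms : ∀ v : Fin n → EuclideanSpace ℝ (Fin d),
      rmsNorm v = (Real.sqrt n)⁻¹ * Real.sqrt (∑ i, ‖v i‖ ^ 2) := fun v => by
    rw [rmsNorm, Fintype.card_fin]
  have key := limsup_rmsNorm_sub_le hμ hμL hsc hsm hopt hdrift
    (fun k => (rmsNorm_le_inv_sqrt_card_mul_sum _).trans (by simpa using hgdrift k)) hWrow hWcol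
    hβ0 hβ1 (fun v hv => by
      simp only [hrms, mix_apply]
      rw [mul_left_comm]
      exact mul_le_mul_of_nonneg_left (hβ v hv) (by positivity))
    hα0 hα (funext hy0) (fun k => funext fun i => by rw [hx k i, mix_apply]; rfl)
    (fun k => funext fun i => by rw [hy k i, Pi.add_apply, mix_apply, add_sub_assoc])
  simpa only [hrms, Pi.sub_apply] using key

theorem dgt_steady_state_tracking_error
    (n d : ℕ) (hn : 1 ≤ n) (hd : 1 ≤ d)
    (μ L : ℝ) (hμ : 0 < μ) (hμL : μ ≤ L)
    (f : ℕ → Fin n → EuclideanSpace ℝ (Fin d) → ℝ)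
    (g : ℕ → Fin n → EuclideanSpace ℝ (Fin d) → EuclideanSpace ℝ (Fin d))
    (hgrad : ∀ k i x, HasGradientAt (f k i) (g k i x) x)
    (hsc : ∀ k i x y, (inner ℝ (g k i x - g k i y) (x - y) : ℝ) ≥ μ * ‖x - y‖ ^ 2)
    (hsm : ∀ k i x y, ‖g k i x - g k i y‖ ≤ L * ‖x - y‖)
    (xstar : ℕ → EuclideanSpace ℝ (Fin d))
    (hopt : ∀ k, ∑ i, g k i (xstar k) = 0)
    (Δx : ℝ) (hΔx : 0 < Δx)
    (hdrift : ∀ k, ‖xstar (k + 1) - xstar k‖ ≤ Δx)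
    (Δg : ℝ) (hΔg : 0 < Δg)
    (hgdrift : ∀ k, (Real.sqrt n)⁻¹ *
      ∑ i, ‖g (k + 1) i (xstar (k + 1)) - g k i (xstar k)‖ ≤ Δg)
    (W : Fin n → Fin n → ℝ)
    (hWnonneg : ∀ i j, 0 ≤ W i j)
    (hWrow : ∀ i, ∑ j, W i j = 1)
    (hWcol : ∀ j, ∑ i, W i j = 1)
    (β : ℝ) (hβ0 : 0 ≤ β) (hβ1 : β < 1)
    (hβ : ∀ v : Fin n → EuclideanSpace ℝ (Fin d), (∑ i, v i) = 0 →
      Real.sqrt (∑ i, ‖∑ j, W i j • v j‖ ^ 2) ≤ β * Real.sqrt (∑ i, ‖v i‖ ^ 2))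
    (α : ℝ) (hα0 : 0 < α) (hα : α ≤ (1 - β) ^ 2 * μ / (768 * L ^ 2))
    (x y : ℕ → Fin n → EuclideanSpace ℝ (Fin d))
    (hy0 : ∀ i, y 0 i = g 0 i (x 0 i))
    (hx : ∀ k i, x (k + 1) i = ∑ j, W i j • (x k j - α • y k j))
    (hy : ∀ k i, y (k + 1) i =
      (∑ j, W i j • y k j) + g (k + 1) i (x (k + 1) i) - g k i (x k i)) :
    Filter.limsup
      (fun k => (Real.sqrt n)⁻¹ * Real.sqrt (∑ i, ‖x k i - xstar k‖ ^ 2))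
      Filter.atTop ≤
      (4 / (α * μ) + 40 * β * L / ((1 - β) ^ 2 * μ)) * Δx
      + 16 * α * β * L * Δg / ((1 - β) ^ 2 * μ) :=
  dgt_steady_state_tracking_error_general n d hn μ L hμ hμL g hsc hsm xstar hopt Δx hdrift Δg
    hgdrift W hWrow hWcol β hβ0 hβ1 hβ α hα0 hα x y hy0 hx hy
end

section
/- For real numbers β ∈ (0,1), 0 < μ ≤ L and step-size α with 0 < α ≤ μ(1−β)/(10L²), the inequality (1 − αμ/2 − β)² + 4βα²L² ≤ (1 − αμ/4 − β)² holds. -/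
/-!
Write `a = αμ`, `b = 1 - β`. The difference of the two squares is `ab/2 - 3a²/16`, so it suffices
that `4βα²L² ≤ ab/2 - 3a²/16`. The step-size condition gives `10α²L² ≤ ab` (hence, as `β < 1`,
`4βα²L² ≤ 2ab/5`) and, via `μ ≤ L`, `10a ≤ b` (hence `3a²/16 ≤ 3ab/160`).
-/

lemma sq_sub_half_add_le_sq_sub_quarter {a b c : ℝ} (ha : 0 ≤ a) (hab : 10 * a ≤ b)
    (hc : 10 * c ≤ a * b) : (b - a / 2) ^ 2 + 4 * c ≤ (b - a / 4) ^ 2 := by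
  nlinarith [mul_le_mul_of_nonneg_left hab ha]

section StepSize

variable {α μ L b : ℝ}

lemma ten_mul_mul_sq_le_of_le_div (hL : 0 < L) (hα : α ≤ μ * b / (10 * L ^ 2)) :
    10 * α * L ^ 2 ≤ μ * b := by
  rw [le_div_iff₀ (by positivity)] at hα
  linarith

lemma ten_mul_sq_mul_sq_le_of_le_div (hL : 0 < L) (hα0 : 0 ≤ α)
    (hα : α ≤ μ * b / (10 * L ^ 2)) : 10 * (α ^ 2 * L ^ 2) ≤ α * μ * b := by
  nlinarith [mul_le_mul_of_nonneg_left (ten_mul_mul_sq_le_of_le_div hL hα) hα0]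

lemma ten_mul_mul_le_of_le_div (hμ : 0 < μ) (hμL : μ ≤ L) (hb : 0 ≤ b)
    (hα : α ≤ μ * b / (10 * L ^ 2)) : 10 * (α * μ) ≤ b := by
  have hL : 0 < L := hμ.trans_le hμL
  have hsq : μ ^ 2 ≤ L ^ 2 := pow_le_pow_left₀ hμ.le hμL 2
  have : 10 * (α * μ) * L ^ 2 ≤ b * L ^ 2 := by
    nlinarith [mul_le_mul_of_nonneg_left (ten_mul_mul_sq_le_of_le_div hL hα) hμ.le,
      mul_le_mul_of_nonneg_right hsq hb]
  exact le_of_mul_le_mul_right this (by positivity)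

end StepSize

theorem diffusion_root_inequality_general
    (β μ L α : ℝ) (hβ1 : β < 1) (hμ : 0 < μ) (hμL : μ ≤ L)
    (hα0 : 0 < α) (hα : α ≤ μ * (1 - β) / (10 * L ^ 2)) :
    (1 - α * μ / 2 - β) ^ 2 + 4 * β * α ^ 2 * L ^ 2 ≤ (1 - α * μ / 4 - β) ^ 2 := by
  have hb : 0 ≤ 1 - β := by linarith
  have hαμ : 10 * (α * μ) ≤ 1 - β := ten_mul_mul_le_of_le_div hμ hμL hb hα
  have hαL := ten_mul_sq_mul_sq_le_of_le_div (hμ.trans_le hμL) hα0.le hα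
  have hβαL : 10 * (β * α ^ 2 * L ^ 2) ≤ α * μ * (1 - β) := by
    nlinarith [mul_le_mul_of_nonneg_right hβ1.le (by positivity : 0 ≤ α ^ 2 * L ^ 2)]
  have key := sq_sub_half_add_le_sq_sub_quarter (by positivity) hαμ hβαL
  linarith

theorem diffusion_root_inequality
    (β μ L α : ℝ) (hβ0 : 0 < β) (hβ1 : β < 1) (hμ : 0 < μ) (hμL : μ ≤ L)
    (hα0 : 0 < α) (hα : α ≤ μ * (1 - β) / (10 * L ^ 2)) :
    (1 - α * μ / 2 - β) ^ 2 + 4 * β * α ^ 2 * L ^ 2 ≤ (1 - α * μ / 4 - β) ^ 2 :=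
  diffusion_root_inequality_general β μ L α hβ1 hμ hμL hα0 hα
end

section
/- For real numbers β ∈ (0,1), 0 < μ ≤ L and step-size α with 0 < α ≤ (1−β)²μ/(768L²), define the cubic polynomial p(τ) = [(τ − (1+β)/2)(τ − β) − 5αβL]·(τ − (1 − αμ/2)) − 3α²βL². Then p(τ) ≥ 0 for every real τ ≥ 1 − αμ/4. -/
/-!
Write the cubic as `(A * B - c) * C - d` with `A = τ - (1 + β) / 2`, `B = τ - β`,
`C = τ - (1 - α μ / 2)`. For `τ ≥ 1 - α μ / 4` the three factors are at least `(1 - β) / 4`,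
`(1 - β) / 2` and `α μ / 4`. The step-size bound gives `768 α L ≤ (1 - β)²`, so the coupling
`c = 5 α β L` eats less than a twelfth of `(1 - β)² / 8`, and `768 α² L² ≤ α μ (1 - β)²`, so
`d = 3 α² β L²` is of lower order than `(1 - β)² α μ`: the cubic stays nonnegative.
-/

theorem mul_sub_mul_sub_nonneg {A B C a b c γ d : ℝ} (ha : 0 ≤ a) (hb : 0 ≤ b) (hγ : 0 ≤ γ)
    (hA : a ≤ A) (hB : b ≤ B) (hC : γ ≤ C) (hc : c ≤ a * b) (hd : d ≤ (a * b - c) * γ) :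
    0 ≤ (A * B - c) * C - d := by
  have hAB : a * b ≤ A * B := mul_le_mul hA hB hb (ha.trans hA)
  have : (a * b - c) * γ ≤ (A * B - c) * C := mul_le_mul (by linarith) hC hγ (by linarith)
  linarith

section StepSize

variable {β μ L α : ℝ}

theorem stepSize_mul_sq_le (hL : 0 < L) (hα : α ≤ (1 - β) ^ 2 * μ / (768 * L ^ 2)) :
    768 * (α * L ^ 2) ≤ (1 - β) ^ 2 * μ := by
  rw [le_div_iff₀ (by positivity)] at hα
  linarith

theorem stepSize_mul_le (hμL : μ ≤ L) (hL : 0 < L)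
    (hα : α ≤ (1 - β) ^ 2 * μ / (768 * L ^ 2)) : 768 * (α * L) ≤ (1 - β) ^ 2 := by
  have h := stepSize_mul_sq_le hL hα
  have : (1 - β) ^ 2 * μ ≤ (1 - β) ^ 2 * L := by gcongr
  nlinarith

theorem stepSize_sq_mul_sq_le (hα0 : 0 ≤ α) (hL : 0 < L)
    (hα : α ≤ (1 - β) ^ 2 * μ / (768 * L ^ 2)) :
    768 * (α * L) ^ 2 ≤ α * μ * (1 - β) ^ 2 := by
  have := mul_le_mul_of_nonneg_left (stepSize_mul_sq_le hL hα) hα0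
  linarith

end StepSize

theorem dgt_charpoly_nonneg
    (β μ L α : ℝ) (hβ0 : 0 < β) (hβ1 : β < 1) (hμ : 0 < μ) (hμL : μ ≤ L)
    (hα0 : 0 < α) (hα : α ≤ (1 - β) ^ 2 * μ / (768 * L ^ 2)) :
    ∀ τ : ℝ, 1 - α * μ / 4 ≤ τ →
      ((τ - (1 + β) / 2) * (τ - β) - 5 * α * β * L) * (τ - (1 - α * μ / 2))
        - 3 * α ^ 2 * β * L ^ 2 ≥ 0 := by
  intro τ hτ
  have hL : 0 < L := hμ.trans_le hμL
  have hαL : 768 * (α * L) ≤ (1 - β) ^ 2 := stepSize_mul_le hμL hL hα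
  have hαL2 : 768 * (α * L) ^ 2 ≤ α * μ * (1 - β) ^ 2 := stepSize_sq_mul_sq_le hα0.le hL hα
  have hsq : (1 - β) ^ 2 ≤ 1 - β := by nlinarith
  have hαμ : α * μ ≤ 1 - β := by linarith [mul_le_mul_of_nonneg_left hμL hα0.le]
  have hc : 5 * α * β * L ≤ 5 * (1 - β) ^ 2 / 768 := by nlinarith [mul_pos hα0 hL]
  have hd : 3 * α ^ 2 * β * L ^ 2 ≤ 3 * (α * μ * (1 - β) ^ 2) / 768 := by
    nlinarith [sq_nonneg (α * L)]
  have hgap : 91 * (1 - β) ^ 2 / 768 ≤ (1 - β) / 4 * ((1 - β) / 2) - 5 * α * β * L := by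
    linarith
  have hαμ0 : 0 ≤ α * μ := by positivity
  refine mul_sub_mul_sub_nonneg (a := (1 - β) / 4) (b := (1 - β) / 2) (γ := α * μ / 4)
    (by linarith) (by linarith) (by positivity) (by linarith) (by linarith) (by linarith)
    (by linarith [sq_nonneg (1 - β)]) ?_
  linarith [mul_le_mul_of_nonneg_right hgap hαμ0, mul_nonneg hαμ0 (sq_nonneg (1 - β))]
end

section
/- For the DGT iterates: for every step-size α > 0 and every time k ∈ ℕ, (Σ_{i=1}^n ‖x_i^{k+1} − x_i^k‖²)^{1/2} ≤ (2 + αL)·(Σ_{i=1}^n ‖x_i^k − x̄^k‖²)^{1/2} + α·(Σ_{i=1}^n ‖y_i^k − ȳ^k‖²)^{1/2} + αL·√n·‖x̄^k − x̃^{k*}‖. -/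
/-! Since `W` fixes constant vectors, the increment splits as
`x^{k+1} - x^k = W(x^k - 𝟙x̄^k) - (x^k - 𝟙x̄^k) - α W(y^k - 𝟙ȳ^k) - α 𝟙ȳ^k`.
Mixing by a doubly stochastic matrix is nonexpansive in the stacked ℓ² norm (Jensen for `‖·‖²`
along each row, then the column sums), which bounds the first three terms. For the last one,
gradient tracking preserves `∑ᵢ yᵢ^k = ∑ᵢ ∇fᵢ^k(xᵢ^k)`; subtracting `∑ᵢ ∇fᵢ^k(x̃^{k*}) = 0` and
using `L`-smoothness gives `n‖ȳ^k‖ ≤ L ∑ᵢ ‖xᵢ^k - x̃^{k*}‖ ≤ L (√n ‖x^k - 𝟙x̄^k‖ + n ‖x̄^k - x̃^{k*}‖)`.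
-/

open Finset Matrix

section StackedNorm

variable {ι E : Type*} [Fintype ι] [NormedAddCommGroup E]

lemma sqrt_sum_norm_sq_sub_le (a b : ι → E) :
    √(∑ i, ‖a i - b i‖ ^ 2) ≤ √(∑ i, ‖a i‖ ^ 2) + √(∑ i, ‖b i‖ ^ 2) := by
  simpa only [PiLp.norm_eq_of_L2, WithLp.ofLp_sub, Pi.sub_apply, PiLp.toLp_apply] using
    norm_sub_le (WithLp.toLp 2 a) (WithLp.toLp 2 b)

lemma sqrt_sum_norm_sq_const (v : E) :
    √(∑ _i : ι, ‖v‖ ^ 2) = √(Fintype.card ι) * ‖v‖ := by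
  rw [sum_const, card_univ, nsmul_eq_mul, Real.sqrt_mul (Nat.cast_nonneg _),
    Real.sqrt_sq (norm_nonneg v)]

lemma sum_norm_le_sqrt_card_mul (v : ι → E) :
    ∑ i, ‖v i‖ ≤ √(Fintype.card ι) * √(∑ i, ‖v i‖ ^ 2) := by
  rw [← Real.sqrt_mul (Nat.cast_nonneg _)]
  exact Real.le_sqrt_of_sq_le (sq_sum_le_card_mul_sum_sq ..)

variable [NormedSpace ℝ E]

lemma sqrt_sum_norm_sq_smul (c : ℝ) (a : ι → E) :
    √(∑ i, ‖c • a i‖ ^ 2) = |c| * √(∑ i, ‖a i‖ ^ 2) := by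
  simpa only [PiLp.norm_eq_of_L2, WithLp.toLp_smul, PiLp.smul_apply, PiLp.toLp_apply,
    Real.norm_eq_abs] using norm_smul c (WithLp.toLp 2 a)

lemma sum_norm_sq_sum_smul_le [DecidableEq ι] {W : Matrix ι ι ℝ}
    (hW : W ∈ doublyStochastic ℝ ι) (v : ι → E) :
    ∑ i, ‖∑ j, W i j • v j‖ ^ 2 ≤ ∑ j, ‖v j‖ ^ 2 := by
  have hconv : ConvexOn ℝ Set.univ (fun u : E => ‖u‖ ^ 2) :=
    convexOn_univ_norm.pow (fun _ _ => norm_nonneg _) 2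
  calc ∑ i, ‖∑ j, W i j • v j‖ ^ 2 ≤ ∑ i, ∑ j, W i j * ‖v j‖ ^ 2 := by
        gcongr with i
        exact hconv.map_sum_le (fun j _ => nonneg_of_mem_doublyStochastic hW)
          (sum_row_of_mem_doublyStochastic hW i) (fun _ _ => Set.mem_univ _)
    _ = ∑ j, ‖v j‖ ^ 2 := by
        rw [sum_comm]
        simp only [← sum_mul, sum_col_of_mem_doublyStochastic hW, one_mul]

end StackedNorm

section GradientTracking

variable {ι E : Type*} [Fintype ι] [NormedAddCommGroup E] [NormedSpace ℝ E]

lemma sum_tracking_eq {W : ι → ι → ℝ} (hW : ∀ j, ∑ i, W i j = 1) {G y : ℕ → ι → E}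
    (h0 : ∑ i, y 0 i = ∑ i, G 0 i)
    (hy : ∀ k i, y (k + 1) i = (∑ j, W i j • y k j) + G (k + 1) i - G k i) (k : ℕ) :
    ∑ i, y k i = ∑ i, G k i := by
  induction k with
  | zero => exact h0
  | succ k ih =>
    have hmix : ∑ i, ∑ j, W i j • y k j = ∑ j, y k j := by
      rw [sum_comm]
      simp only [← sum_smul, hW, one_smul]
    simp only [hy, sum_sub_distrib, sum_add_distrib, hmix, ih, add_sub_cancel_left]

lemma mix_sub_eq {W : ι → ι → ℝ} {i : ι} (hW : ∑ j, W i j = 1) (α : ℝ) (x y : ι → E)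
    (a b : E) :
    ∑ j, W i j • (x j - α • y j) - x i =
      (∑ j, W i j • (x j - a)) - (x i - a) - α • (∑ j, W i j • (y j - b)) - α • b := by
  have hconst (c : E) : ∑ j, W i j • c = c := by rw [← sum_smul, hW, one_smul]
  simp only [smul_sub, sum_sub_distrib, hconst, smul_sum, smul_comm α]
  abel

lemma sqrt_sum_norm_sq_mix_sub_le [DecidableEq ι] {W : Matrix ι ι ℝ}
    (hW : W ∈ doublyStochastic ℝ ι) {α : ℝ} (hα : 0 ≤ α) (x y : ι → E) (a b : E) :
    √(∑ i, ‖∑ j, W i j • (x j - α • y j) - x i‖ ^ 2) ≤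
      2 * √(∑ i, ‖x i - a‖ ^ 2) + α * √(∑ i, ‖y i - b‖ ^ 2)
        + α * (√(Fintype.card ι) * ‖b‖) := by
  have hcontract (u : ι → E) : √(∑ i, ‖∑ j, W i j • u j‖ ^ 2) ≤ √(∑ i, ‖u i‖ ^ 2) :=
    Real.sqrt_le_sqrt (sum_norm_sq_sum_smul_le hW u)
  simp only [mix_sub_eq (sum_row_of_mem_doublyStochastic hW _) α x y a b]
  calc _ ≤ √(∑ i, ‖∑ j, W i j • (x j - a) - (x i - a) - α • ∑ j, W i j • (y j - b)‖ ^ 2)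
          + √(∑ _i : ι, ‖α • b‖ ^ 2) := sqrt_sum_norm_sq_sub_le _ _
    _ ≤ √(∑ i, ‖∑ j, W i j • (x j - a)‖ ^ 2) + √(∑ i, ‖x i - a‖ ^ 2)
          + √(∑ i, ‖α • ∑ j, W i j • (y j - b)‖ ^ 2) + √(∑ _i : ι, ‖α • b‖ ^ 2) := by
        gcongr
        exact (sqrt_sum_norm_sq_sub_le _ _).trans (by gcongr; exact sqrt_sum_norm_sq_sub_le _ _)
    _ ≤ _ := by
        rw [sqrt_sum_norm_sq_smul, sqrt_sum_norm_sq_const, norm_smul, abs_of_nonneg hα,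
          Real.norm_of_nonneg hα]
        have hx := hcontract fun j => x j - a
        have hy := mul_le_mul_of_nonneg_left (hcontract fun j => y j - b) hα
        linarith

lemma sqrt_card_mul_norm_mean_le {G : ι → E → E} {L : ℝ} (hL : 0 ≤ L)
    (hG : ∀ i u v, ‖G i u - G i v‖ ≤ L * ‖u - v‖) {z : E} (hz : ∑ i, G i z = 0)
    (v : ι → E) (c : E) :
    √(Fintype.card ι) * ‖(Fintype.card ι : ℝ)⁻¹ • ∑ i, G i (v i)‖ ≤
      L * (√(∑ i, ‖v i - c‖ ^ 2) + √(Fintype.card ι) * ‖c - z‖) := by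
  set N := ((Fintype.card ι : ℕ) : ℝ)
  have hN : √N * √N = N := Real.mul_self_sqrt (Nat.cast_nonneg _)
  have hsum : ‖∑ i, G i (v i)‖ ≤ √N * (L * (√(∑ i, ‖v i - c‖ ^ 2) + √N * ‖c - z‖)) :=
    calc ‖∑ i, G i (v i)‖ = ‖∑ i, (G i (v i) - G i z)‖ := by
          rw [sum_sub_distrib, hz, sub_zero]
      _ ≤ ∑ i, L * ‖v i - z‖ := (norm_sum_le _ _).trans (sum_le_sum fun i _ => hG i _ _)
      _ ≤ L * ∑ i, (‖v i - c‖ + ‖c - z‖) := by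
        rw [← mul_sum]
        gcongr with i
        exact norm_sub_le_norm_sub_add_norm_sub _ _ _
      _ ≤ L * (√N * √(∑ i, ‖v i - c‖ ^ 2) + N * ‖c - z‖) := by
        rw [sum_add_distrib, sum_const, card_univ, nsmul_eq_mul]
        gcongr
        exact sum_norm_le_sqrt_card_mul _
      _ = √N * (L * (√(∑ i, ‖v i - c‖ ^ 2) + √N * ‖c - z‖)) := by
        linear_combination L * ‖c - z‖ * hN.symm
  calc √N * ‖N⁻¹ • ∑ i, G i (v i)‖ = N⁻¹ * √N * ‖∑ i, G i (v i)‖ := by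
        rw [norm_smul, Real.norm_of_nonneg (by positivity)]
        ring
    _ ≤ N⁻¹ * √N * (√N * (L * (√(∑ i, ‖v i - c‖ ^ 2) + √N * ‖c - z‖))) := by gcongr
    _ = N⁻¹ * (√N * √N) * (L * (√(∑ i, ‖v i - c‖ ^ 2) + √N * ‖c - z‖)) := by ring
    _ ≤ L * (√(∑ i, ‖v i - c‖ ^ 2) + √N * ‖c - z‖) := by
        rw [hN]
        exact mul_le_of_le_one_left (by positivity) inv_mul_le_one

end GradientTracking

theorem dgt_iterate_increment_bound_general
    (n d : ℕ)
    (L : ℝ) (hL : 0 < L)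
    (g : ℕ → Fin n → EuclideanSpace ℝ (Fin d) → EuclideanSpace ℝ (Fin d))
    (hsm : ∀ k i x y, ‖g k i x - g k i y‖ ≤ L * ‖x - y‖)
    (xstar : ℕ → EuclideanSpace ℝ (Fin d))
    (hopt : ∀ k, ∑ i, g k i (xstar k) = 0)
    (W : Fin n → Fin n → ℝ)
    (hWnonneg : ∀ i j, 0 ≤ W i j)
    (hWrow : ∀ i, ∑ j, W i j = 1)
    (hWcol : ∀ j, ∑ i, W i j = 1)
    (α : ℝ) (hα0 : 0 < α)
    (x y : ℕ → Fin n → EuclideanSpace ℝ (Fin d))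
    (hy0 : ∀ i, y 0 i = g 0 i (x 0 i))
    (hx : ∀ k i, x (k + 1) i = ∑ j, W i j • (x k j - α • y k j))
    (hy : ∀ k i, y (k + 1) i =
      (∑ j, W i j • y k j) + g (k + 1) i (x (k + 1) i) - g k i (x k i))
    (xbar ybar : ℕ → EuclideanSpace ℝ (Fin d))
    (hybar : ∀ k, ybar k = (n : ℝ)⁻¹ • ∑ i, y k i)
    (k : ℕ) :
    Real.sqrt (∑ i, ‖x (k + 1) i - x k i‖ ^ 2) ≤
      (2 + α * L) * Real.sqrt (∑ i, ‖x k i - xbar k‖ ^ 2)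
      + α * Real.sqrt (∑ i, ‖y k i - ybar k‖ ^ 2)
      + α * L * (Real.sqrt n * ‖xbar k - xstar k‖) := by
  have hW : W ∈ doublyStochastic ℝ (Fin n) :=
    mem_doublyStochastic_iff_sum.2 ⟨hWnonneg, hWrow, hWcol⟩
  have htrack : ∑ i, y k i = ∑ i, g k i (x k i) :=
    sum_tracking_eq (G := fun m i => g m i (x m i)) hWcol (sum_congr rfl fun i _ => hy0 i) hy k
  have hmean : √n * ‖ybar k‖ ≤
      L * (√(∑ i, ‖x k i - xbar k‖ ^ 2) + √n * ‖xbar k - xstar k‖) := by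
    rw [hybar k, htrack]
    simpa only [Fintype.card_fin] using
      sqrt_card_mul_norm_mean_le hL.le (hsm k) (hopt k) (x k) (xbar k)
  have hstep := sqrt_sum_norm_sq_mix_sub_le hW hα0.le (x k) (y k) (xbar k) (ybar k)
  simp only [← hx k, Fintype.card_fin] at hstep
  linarith [mul_le_mul_of_nonneg_left hmean hα0.le]

theorem dgt_iterate_increment_bound
    (n d : ℕ) (hn : 1 ≤ n) (hd : 1 ≤ d)
    (L : ℝ) (hL : 0 < L)
    (f : ℕ → Fin n → EuclideanSpace ℝ (Fin d) → ℝ)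
    (g : ℕ → Fin n → EuclideanSpace ℝ (Fin d) → EuclideanSpace ℝ (Fin d))
    (hgrad : ∀ k i x, HasGradientAt (f k i) (g k i x) x)
    (hsm : ∀ k i x y, ‖g k i x - g k i y‖ ≤ L * ‖x - y‖)
    (xstar : ℕ → EuclideanSpace ℝ (Fin d))
    (hopt : ∀ k, ∑ i, g k i (xstar k) = 0)
    (W : Fin n → Fin n → ℝ)
    (hWnonneg : ∀ i j, 0 ≤ W i j)
    (hWrow : ∀ i, ∑ j, W i j = 1)
    (hWcol : ∀ j, ∑ i, W i j = 1)
    (α : ℝ) (hα0 : 0 < α)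
    (x y : ℕ → Fin n → EuclideanSpace ℝ (Fin d))
    (hy0 : ∀ i, y 0 i = g 0 i (x 0 i))
    (hx : ∀ k i, x (k + 1) i = ∑ j, W i j • (x k j - α • y k j))
    (hy : ∀ k i, y (k + 1) i =
      (∑ j, W i j • y k j) + g (k + 1) i (x (k + 1) i) - g k i (x k i))
    (xbar ybar : ℕ → EuclideanSpace ℝ (Fin d))
    (hxbar : ∀ k, xbar k = (n : ℝ)⁻¹ • ∑ i, x k i)
    (hybar : ∀ k, ybar k = (n : ℝ)⁻¹ • ∑ i, y k i)
    (k : ℕ) :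
    Real.sqrt (∑ i, ‖x (k + 1) i - x k i‖ ^ 2) ≤
      (2 + α * L) * Real.sqrt (∑ i, ‖x k i - xbar k‖ ^ 2)
      + α * Real.sqrt (∑ i, ‖y k i - ybar k‖ ^ 2)
      + α * L * (Real.sqrt n * ‖xbar k - xstar k‖) :=
  dgt_iterate_increment_bound_general n d L hL g hsm xstar hopt W hWnonneg hWrow hWcol α hα0 x y hy0
    hx hy xbar ybar hybar k
end

section
/- Let A be the 2×2 real matrix A = [[1 − αμ/2, αL], [αβL, β]]. If 0 < α ≤ μ(1−β)/(10L²), then I − A is invertible and (I − A)^{-1} is bounded entrywise by the matrix [[4/(αμ), 4L/(μ(1−β))], [4βL/(μ(1−β)), 2/(1−β)]]; that is, every entry of (I − A)^{-1} is at most the corresponding entry of this matrix. -/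
/-! With `I - A = !![αμ/2, -αL; -αβL, 1 - β]`, the step-size condition `αL² ≤ μ(1-β)/10` makes the
off-diagonal product `α²βL²` at most a fifth of the diagonal product `αμ(1-β)/2`, so
`det (I - A) ≥ (2/5)·αμ(1-β) > 0`. Each entry of `(I - A)⁻¹ = det⁻¹ • !![1 - β, αL; αβL, αμ/2]` is
nonnegative, and dividing it by this lower bound already gives the claimed bound. -/

namespace Matrix

theorem one_sub_fin_two_of {R : Type*} [Ring R] (a b c d : R) :
    1 - !![a, b; c, d] = !![1 - a, -b; -c, 1 - d] := by
  rw [one_fin_two]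
  ext i j
  fin_cases i <;> fin_cases j <;> simp

theorem inv_fin_two_of {K : Type*} [Field K] (a b c d : K) :
    (!![a, b; c, d])⁻¹ = (a * d - b * c)⁻¹ • !![d, -b; -c, a] := by
  rw [inv_def, Ring.inverse_eq_inv, det_fin_two_of, adjugate_fin_two_of]

end Matrix

theorem inv_mul_le_of_le_mul_of_le {x B δ D : ℝ} (hδ : 0 < δ) (hD : δ ≤ D) (hx : 0 ≤ x)
    (h : x ≤ B * δ) : D⁻¹ * x ≤ B := by
  have hB : 0 ≤ B := nonneg_of_mul_nonneg_left (hx.trans h) hδ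
  rw [inv_mul_le_iff₀ (hδ.trans_le hD)]
  nlinarith

theorem diffusion_det_lower_bound {μ L β α : ℝ} (hμ : 0 ≤ μ) (hβ0 : 0 ≤ β) (hβ1 : β ≤ 1)
    (hα0 : 0 ≤ α) (hα : α * (10 * L ^ 2) ≤ μ * (1 - β)) :
    2 / 5 * (α * μ * (1 - β)) ≤ α * μ / 2 * (1 - β) - α * L * (α * β * L) := by
  have hαβ : 0 ≤ α * β := mul_nonneg hα0 hβ0
  have hoff : α * L * (α * β * L) ≤ α * β * (μ * (1 - β)) / 10 := by
    nlinarith [mul_le_mul_of_nonneg_left hα hαβ]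
  have hdiag : α * β * (μ * (1 - β)) ≤ α * μ * (1 - β) := by
    nlinarith [mul_nonneg (mul_nonneg hα0 hμ) (sub_nonneg.mpr hβ1)]
  linarith

theorem diffusion_matrix_inverse_bound
    (μ L β α : ℝ) (hμ : 0 < μ) (hμL : μ ≤ L) (hβ0 : 0 < β) (hβ1 : β < 1)
    (hα0 : 0 < α) (hα : α ≤ μ * (1 - β) / (10 * L ^ 2)) :
    IsUnit (1 - (!![1 - α * μ / 2, α * L; α * β * L, β] : Matrix (Fin 2) (Fin 2) ℝ)).det ∧
    ∀ i j, (1 - (!![1 - α * μ / 2, α * L; α * β * L, β] : Matrix (Fin 2) (Fin 2) ℝ))⁻¹ i j ≤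
      (!![4 / (α * μ), 4 * L / (μ * (1 - β));
          4 * β * L / (μ * (1 - β)), 2 / (1 - β)] : Matrix (Fin 2) (Fin 2) ℝ) i j := by
  have hL : 0 < L := hμ.trans_le hμL
  have hβ : 0 < 1 - β := sub_pos.mpr hβ1
  have hαL : α * (10 * L ^ 2) ≤ μ * (1 - β) := (le_div_iff₀ (by positivity)).mp hα
  have hdet := diffusion_det_lower_bound hμ.le hβ0.le hβ1.le hα0.le hαL
  have hP : 0 < α * μ * (1 - β) := by positivity
  have hδ : 0 < 2 / 5 * (α * μ * (1 - β)) := by positivity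
  rw [Matrix.one_sub_fin_two_of, sub_sub_cancel, Matrix.det_fin_two_of, Matrix.inv_fin_two_of,
    neg_mul_neg]
  refine ⟨(hδ.trans_le hdet).ne'.isUnit, fun i j => ?_⟩
  fin_cases i <;> fin_cases j <;>
    simp only [neg_neg, Matrix.smul_apply, Matrix.of_apply, smul_eq_mul, Fin.zero_eta, Fin.mk_one,
      Matrix.cons_val_zero, Matrix.cons_val_one] <;>
    refine inv_mul_le_of_le_mul_of_le hδ hdet (by positivity) ?_
  all_goals
    rw [div_mul_eq_mul_div, le_div_iff₀ (by positivity)]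
    nlinarith [mul_pos hL hP, mul_pos (mul_pos hβ0 hL) hP]
end

section
/- For real numbers β ∈ (0,1), L > 0 and step-size α with 0 < α ≤ 3(1−β)²/(80L), the quadratic p₀(τ) = (τ − (1+β)/2)(τ − β) − 5αβL satisfies p₀(τ) ≥ (τ − (β+3)/4)² for every real τ ≥ (β+3)/4; in particular, both (real) roots of p₀ are at most (β+3)/4. -/
/-!
Subtracting the square, `p₀(τ) - (τ - (β+3)/4)²` is affine in `τ`: it equals
`(1-β)(τ - (β+3)/4) + 3(1-β)²/16 - 5αβL`, and the step-size bound makes `5αβL ≤ 3β(1-β)²/16`.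
A root beyond `(β+3)/4` would then make `p₀` strictly positive there.
-/

lemma quadratic_sub_sq_eq (β τ : ℝ) :
    (τ - (1 + β) / 2) * (τ - β) - (τ - (β + 3) / 4) ^ 2 =
      (1 - β) * (τ - (β + 3) / 4) + 3 * (1 - β) ^ 2 / 16 := by
  ring

lemma five_mul_mul_mul_le_of_le_div {β L α : ℝ} (hβ0 : 0 ≤ β) (hβ1 : β ≤ 1) (hL : 0 < L)
    (hα : α ≤ 3 * (1 - β) ^ 2 / (80 * L)) :
    5 * α * β * L ≤ 3 * (1 - β) ^ 2 / 16 := by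
  have hαL : 5 * α * L ≤ 3 * (1 - β) ^ 2 / 16 := by
    rw [le_div_iff₀ (by positivity)] at hα
    linarith
  calc 5 * α * β * L = β * (5 * α * L) := by ring
    _ ≤ β * (3 * (1 - β) ^ 2 / 16) := mul_le_mul_of_nonneg_left hαL hβ0
    _ ≤ 3 * (1 - β) ^ 2 / 16 := mul_le_of_le_one_left (by positivity) hβ1

lemma le_of_eq_zero_of_forall_sq_sub_le {f : ℝ → ℝ} {c τ : ℝ}
    (hf : ∀ t, c ≤ t → (t - c) ^ 2 ≤ f t) (hτ : f τ = 0) : τ ≤ c := by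
  by_contra! hcτ
  have := hf τ hcτ.le
  nlinarith [sq_pos_of_pos (sub_pos.mpr hcτ)]

theorem dgt_quadratic_root_bound_general
    (β L α : ℝ) (hβ0 : 0 < β) (hβ1 : β < 1) (hL : 0 < L)
    (hα : α ≤ 3 * (1 - β) ^ 2 / (80 * L)) :
    (∀ τ : ℝ, (β + 3) / 4 ≤ τ →
      (τ - (1 + β) / 2) * (τ - β) - 5 * α * β * L ≥ (τ - (β + 3) / 4) ^ 2) ∧
    (∀ τ : ℝ, (τ - (1 + β) / 2) * (τ - β) - 5 * α * β * L = 0 → τ ≤ (β + 3) / 4) := by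
  have hstep := five_mul_mul_mul_le_of_le_div hβ0.le hβ1.le hL hα
  have hsq : ∀ τ : ℝ, (β + 3) / 4 ≤ τ →
      (τ - (1 + β) / 2) * (τ - β) - 5 * α * β * L ≥ (τ - (β + 3) / 4) ^ 2 := by
    intro τ hτ
    have hlin : 0 ≤ (1 - β) * (τ - (β + 3) / 4) :=
      mul_nonneg (sub_nonneg.mpr hβ1.le) (sub_nonneg.mpr hτ)
    linarith [quadratic_sub_sq_eq β τ]
  exact ⟨hsq, fun τ => le_of_eq_zero_of_forall_sq_sub_le
    (f := fun t => (t - (1 + β) / 2) * (t - β) - 5 * α * β * L) hsq⟩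

theorem dgt_quadratic_root_bound
    (β L α : ℝ) (hβ0 : 0 < β) (hβ1 : β < 1) (hL : 0 < L)
    (hα0 : 0 < α) (hα : α ≤ 3 * (1 - β) ^ 2 / (80 * L)) :
    (∀ τ : ℝ, (β + 3) / 4 ≤ τ →
      (τ - (1 + β) / 2) * (τ - β) - 5 * α * β * L ≥ (τ - (β + 3) / 4) ^ 2) ∧
    (∀ τ : ℝ, (τ - (1 + β) / 2) * (τ - β) - 5 * α * β * L = 0 → τ ≤ (β + 3) / 4) :=
  dgt_quadratic_root_bound_general β L α hβ0 hβ1 hL hα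
end
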